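/- arXiv:2305.16380 — 13 statements merged into one kernel-verified Lean document; each statement's English description precedes it below -/
import Mathlib

section
/- For the one-sample cross-entropy objective of the 1-layer transformer in pairwise-token parameterization, the gradients are: ∂J/∂Y = LN(Xᵀb)·(x_{T+1} − α)ᵀ and ∂J/∂Z = x_T·(x_{T+1} − α)ᵀ·Yᵀ·(P⊥_{Xᵀb}/‖Xᵀb‖₂)·Xᵀ·diag(b)·X, where P⊥_v := I − v vᵀ/‖v‖₂². -/
open Matrix Finset

/-- Componentwise softmax: `softmax a = exp a / (1ᵀ exp a)`. -/
noncomputable def softmax {n : Type*} [Fintype n] (a : n → ℝ) : n → ℝ :=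
  fun i => Real.exp (a i) / ∑ j, Real.exp (a j)

/-- Euclidean norm of a vector. -/
noncomputable def norm2 {n : Type*} [Fintype n] (v : n → ℝ) : ℝ :=
  Real.sqrt (∑ i, v i ^ 2)

/-- ℓ₂-normalization `LN(v) := v/‖v‖₂`. -/
noncomputable def LN {n : Type*} [Fintype n] (v : n → ℝ) : n → ℝ :=
  fun i => v i / norm2 v

/-- `P⊥_v := I − v vᵀ/‖v‖₂²`, projection onto the orthogonal complement of `v`. -/
noncomputable def Pperp {n : Type*} [Fintype n] [DecidableEq n] (v : n → ℝ) :
    Matrix n n ℝ :=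
  1 - (norm2 v ^ 2)⁻¹ • Matrix.vecMulVec v v

/-- Attention vector `b := softmax (X Zᵀ x_T)`. -/
noncomputable def battn {M T : ℕ} (X : Matrix (Fin T) (Fin M) ℝ) (xT : Fin M → ℝ)
    (Z : Matrix (Fin M) (Fin M) ℝ) : Fin T → ℝ :=
  softmax (X.mulVec (Zᵀ.mulVec xT))

/-- Prediction `α := softmax (Yᵀ LN(Xᵀ b))`. -/
noncomputable def alphaPred {M T : ℕ} (X : Matrix (Fin T) (Fin M) ℝ) (xT : Fin M → ℝ)
    (Y Z : Matrix (Fin M) (Fin M) ℝ) : Fin M → ℝ :=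
  softmax (Yᵀ.mulVec (LN (Xᵀ.mulVec (battn X xT Z))))

/-- One-sample cross-entropy objective
`J(Y,Z) := x_{T+1}ᵀ Yᵀ LN(Xᵀb) − log (1ᵀ exp (Yᵀ LN(Xᵀb)))`. -/
noncomputable def Jobj {M T : ℕ} (X : Matrix (Fin T) (Fin M) ℝ) (xT xT1 : Fin M → ℝ)
    (Y Z : Matrix (Fin M) (Fin M) ℝ) : ℝ :=
  (∑ l, xT1 l * Yᵀ.mulVec (LN (Xᵀ.mulVec (battn X xT Z))) l) -
    Real.log (∑ l, Real.exp (Yᵀ.mulVec (LN (Xᵀ.mulVec (battn X xT Z))) l))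

/-! Both gradients are directional derivatives along the coordinate lines `Y + s • Eᵢⱼ` and
`Z + s • Eᵢⱼ`, computed by the chain rule through the Jacobians `diag(b) − b bᵀ` of softmax and
`P⊥_v / ‖v‖` of `LN`, and the gradient `y − softmax g` of the log-likelihood `y ⬝ᵥ g − log ∑ exp g`.
In the `Z`-gradient the rank-one part `b bᵀ` drops out: `Xᵀ b bᵀ c` is a multiple of `v = Xᵀ b`,
which `P⊥_v` annihilates. -/

variable {ι : Type*} [Fintype ι] {x : ℝ}

lemma norm2_eq_sqrt_dotProduct (v : ι → ℝ) : norm2 v = Real.sqrt (v ⬝ᵥ v) := by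
  simp only [norm2, dotProduct, sq]

lemma dotProduct_self_nonneg (v : ι → ℝ) : 0 ≤ v ⬝ᵥ v :=
  Finset.sum_nonneg fun i _ => mul_self_nonneg (v i)

lemma norm2_sq (v : ι → ℝ) : norm2 v ^ 2 = v ⬝ᵥ v := by
  rw [norm2_eq_sqrt_dotProduct, Real.sq_sqrt (dotProduct_self_nonneg v)]

lemma norm2_pos {v : ι → ℝ} (hv : v ≠ 0) : 0 < norm2 v := by
  rw [norm2_eq_sqrt_dotProduct]
  exact Real.sqrt_pos.mpr <|
    (dotProduct_self_nonneg v).lt_of_ne' (mt dotProduct_self_eq_zero.mp hv)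

lemma Pperp_mulVec_self [DecidableEq ι] {v : ι → ℝ} (hv : v ≠ 0) : Pperp v *ᵥ v = 0 := by
  have hsq : v ⬝ᵥ v ≠ 0 := mt dotProduct_self_eq_zero.mp hv
  rw [Pperp, sub_mulVec, one_mulVec, smul_mulVec, vecMulVec_mulVec, norm2_sq]
  ext i
  simp [hsq]

lemma dotProduct_transpose_single_mulVec [DecidableEq ι] (w u : ι → ℝ) (i j : ι) :
    w ⬝ᵥ ((single i j (1 : ℝ))ᵀ *ᵥ u) = vecMulVec u w i j := by
  rw [transpose_single, single_mulVec, one_mul, ← Pi.single, dotProduct_single,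
    vecMulVec_apply, mul_comm]

lemma mulVec_mulVec_diagonal_sub_vecMulVec {m n : Type*} [Fintype m] [DecidableEq m]
    {P : Matrix n ι ℝ} {A : Matrix ι m ℝ} {b : m → ℝ} (h : P *ᵥ (A *ᵥ b) = 0) (c : m → ℝ) :
    P *ᵥ (A *ᵥ ((diagonal b - vecMulVec b b) *ᵥ c)) = P *ᵥ (A *ᵥ (diagonal b *ᵥ c)) := by
  rw [sub_mulVec, mulVec_sub, mulVec_sub, vecMulVec_mulVec, op_smul_eq_smul, mulVec_smul,
    mulVec_smul, h, smul_zero, sub_zero]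

theorem HasDerivAt.const_mulVec {m : Type*} [Fintype m] (A : Matrix m ι ℝ) {v : ℝ → ι → ℝ}
    {v' : ι → ℝ} (hv : HasDerivAt v v' x) : HasDerivAt (fun s => A *ᵥ v s) (A *ᵥ v') x :=
  (mulVecLin A).toContinuousLinearMap.hasFDerivAt.comp_hasDerivAt (x := x) hv

theorem HasDerivAt.const_dotProduct (w : ι → ℝ) {v : ℝ → ι → ℝ} {v' : ι → ℝ}
    (hv : HasDerivAt v v' x) : HasDerivAt (fun s => w ⬝ᵥ v s) (w ⬝ᵥ v') x :=
  HasDerivAt.fun_sum fun i _ => (hasDerivAt_pi.mp hv i).const_mul (w i)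

theorem HasDerivAt.dotProduct_self {v : ℝ → ι → ℝ} {v' : ι → ℝ} (hv : HasDerivAt v v' x) :
    HasDerivAt (fun s => v s ⬝ᵥ v s) (2 * (v x ⬝ᵥ v')) x := by
  refine (HasDerivAt.fun_sum fun i _ => (hasDerivAt_pi.mp hv i).mul (hasDerivAt_pi.mp hv i))
    |>.congr_deriv ?_
  simp only [dotProduct, Finset.mul_sum]
  exact Finset.sum_congr rfl fun i _ => by ring

theorem hasDerivAt_add_smul_transpose_mulVec {m : Type*} [Fintype m] (A B : Matrix ι m ℝ)
    (u : ι → ℝ) :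
    HasDerivAt (fun s : ℝ => (A + s • B)ᵀ *ᵥ u) (Bᵀ *ᵥ u) x := by
  simp only [transpose_add, transpose_smul, add_mulVec, smul_mulVec]
  simpa using ((hasDerivAt_id x).smul_const (Bᵀ *ᵥ u)).const_add (Aᵀ *ᵥ u)

theorem HasDerivAt.norm2 {v : ℝ → ι → ℝ} {v' : ι → ℝ} (hv : HasDerivAt v v' x)
    (h0 : v x ≠ 0) :
    HasDerivAt (fun s => _root_.norm2 (v s)) ((v x ⬝ᵥ v') / _root_.norm2 (v x)) x := by
  have hsq : v x ⬝ᵥ v x ≠ 0 := mt dotProduct_self_eq_zero.mp h0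
  simp only [norm2_eq_sqrt_dotProduct]
  refine (hv.dotProduct_self.sqrt hsq).congr_deriv ?_
  ring

lemma sum_exp_pos [Nonempty ι] (a : ι → ℝ) : 0 < ∑ j, Real.exp (a j) :=
  Finset.sum_pos (fun j _ => Real.exp_pos (a j)) Finset.univ_nonempty

theorem HasDerivAt.LN [DecidableEq ι] {v : ℝ → ι → ℝ} {v' : ι → ℝ} (hv : HasDerivAt v v' x)
    (h0 : v x ≠ 0) :
    HasDerivAt (fun s => _root_.LN (v s))
      (((_root_.norm2 (v x))⁻¹ • Pperp (v x)) *ᵥ v') x := by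
  have hn := (norm2_pos h0).ne'
  refine hasDerivAt_pi.mpr fun i =>
    ((hasDerivAt_pi.mp hv i).div (hv.norm2 h0) hn).congr_deriv ?_
  simp only [Pperp, smul_mulVec, sub_mulVec, one_mulVec, vecMulVec_mulVec, norm2_sq,
    Pi.smul_apply, Pi.sub_apply, smul_eq_mul, MulOpposite.smul_eq_mul_unop,
    MulOpposite.unop_op]
  rw [← norm2_sq]
  field_simp

theorem HasDerivAt.softmax [DecidableEq ι] {a : ℝ → ι → ℝ} {a' : ι → ℝ}
    (ha : HasDerivAt a a' x) :
    HasDerivAt (fun s => _root_.softmax (a s))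
      ((diagonal (_root_.softmax (a x)) -
        vecMulVec (_root_.softmax (a x)) (_root_.softmax (a x))) *ᵥ a') x := by
  refine hasDerivAt_pi.mpr fun i => ?_
  have : Nonempty ι := ⟨i⟩
  have hS := HasDerivAt.fun_sum fun j (_ : j ∈ Finset.univ) => (hasDerivAt_pi.mp ha j).exp
  refine ((hasDerivAt_pi.mp ha i).exp.div hS (sum_exp_pos (a x)).ne').congr_deriv ?_
  simp only [_root_.softmax, sub_mulVec, vecMulVec_mulVec, mulVec_diagonal, dotProduct,
    Pi.sub_apply, Pi.smul_apply, MulOpposite.smul_eq_mul_unop, MulOpposite.unop_op,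
    div_mul_eq_mul_div, ← Finset.sum_div]
  field_simp

theorem HasDerivAt.dotProduct_sub_log_sum_exp [Nonempty ι] (y : ι → ℝ) {g : ℝ → ι → ℝ}
    {g' : ι → ℝ} (hg : HasDerivAt g g' x) :
    HasDerivAt (fun s => y ⬝ᵥ g s - Real.log (∑ l, Real.exp (g s l)))
      ((y - _root_.softmax (g x)) ⬝ᵥ g') x := by
  have hS := HasDerivAt.fun_sum fun l (_ : l ∈ Finset.univ) => (hasDerivAt_pi.mp hg l).exp
  refine ((hg.const_dotProduct y).sub (hS.log (sum_exp_pos (g x)).ne')).congr_deriv ?_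
  simp only [_root_.softmax, dotProduct, Pi.sub_apply, sub_mul, Finset.sum_sub_distrib,
    div_mul_eq_mul_div, Finset.sum_div]

theorem stmt_0_general (M T : ℕ) (X : Matrix (Fin T) (Fin M) ℝ) (xT xT1 : Fin M → ℝ)
    (Y Z : Matrix (Fin M) (Fin M) ℝ)
    -- assume `Xᵀ b ≠ 0`
    (hv : Xᵀ.mulVec (battn X xT Z) ≠ 0) :
    -- gradient with respect to `Y`
    (∀ i j : Fin M,
      HasDerivAt (fun s : ℝ => Jobj X xT xT1 (Y + s • Matrix.single i j 1) Z)
        (Matrix.vecMulVec (LN (Xᵀ.mulVec (battn X xT Z)))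
          (xT1 - alphaPred X xT Y Z) i j) 0) ∧
    -- gradient with respect to `Z`
    (∀ i j : Fin M,
      HasDerivAt (fun s : ℝ => Jobj X xT xT1 Y (Z + s • Matrix.single i j 1))
        (Matrix.vecMulVec xT
          ((xT1 - alphaPred X xT Y Z) ᵥ*
            (Yᵀ * ((norm2 (Xᵀ.mulVec (battn X xT Z)))⁻¹ •
                Pperp (Xᵀ.mulVec (battn X xT Z))) *
              Xᵀ * Matrix.diagonal (battn X xT Z) * X)) i j) 0) := by
  refine ⟨fun i j => ?_, fun i j => ?_⟩
  · have : Nonempty (Fin M) := ⟨i⟩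
    have hg := hasDerivAt_add_smul_transpose_mulVec (x := 0) Y (single i j 1)
      (LN (Xᵀ *ᵥ battn X xT Z))
    refine (hg.dotProduct_sub_log_sum_exp xT1).congr_deriv ?_
    rw [zero_smul, add_zero, dotProduct_transpose_single_mulVec]
    rfl
  · have : Nonempty (Fin M) := ⟨i⟩
    have hb : softmax (X *ᵥ (Zᵀ *ᵥ xT)) = battn X xT Z := rfl
    have hlogits :=
      (hasDerivAt_add_smul_transpose_mulVec (x := 0) Z (single i j 1) xT).const_mulVec X
    have hattn := hlogits.softmax.const_mulVec Xᵀ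
    have hLN := hattn.LN (by simpa only [zero_smul, add_zero, hb] using hv)
    refine ((hLN.const_mulVec Yᵀ).dotProduct_sub_log_sum_exp xT1).congr_deriv ?_
    have hP : ((norm2 (Xᵀ *ᵥ battn X xT Z))⁻¹ • Pperp (Xᵀ *ᵥ battn X xT Z)) *ᵥ
        (Xᵀ *ᵥ battn X xT Z) = 0 := by
      rw [smul_mulVec, Pperp_mulVec_self hv, smul_zero]
    simp only [zero_smul, add_zero, hb]
    rw [mulVec_mulVec_diagonal_sub_vecMulVec hP, mulVec_mulVec, mulVec_mulVec, mulVec_mulVec,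
      mulVec_mulVec, dotProduct_mulVec, dotProduct_transpose_single_mulVec]
    rfl

/-- For the one-sample cross-entropy objective of the 1-layer transformer in
pairwise-token parameterization, the gradients (matrices of partial derivatives) are
`∂J/∂Y = LN(Xᵀb)·(x_{T+1} − α)ᵀ` and
`∂J/∂Z = x_T·(x_{T+1} − α)ᵀ·Yᵀ·(P⊥_{Xᵀb}/‖Xᵀb‖₂)·Xᵀ·diag(b)·X`. -/
theorem stmt_0 (M T : ℕ) (X : Matrix (Fin T) (Fin M) ℝ) (xT xT1 : Fin M → ℝ)
    -- the rows of `X` and the vectors `x_T`, `x_{T+1}` are one-hot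
    (hX : ∀ t : Fin T, ∃ l : Fin M, X t = fun j => if j = l then (1 : ℝ) else 0)
    (hxT : ∃ m : Fin M, xT = fun j => if j = m then (1 : ℝ) else 0)
    (hxT1 : ∃ n : Fin M, xT1 = fun j => if j = n then (1 : ℝ) else 0)
    (Y Z : Matrix (Fin M) (Fin M) ℝ)
    -- assume `Xᵀ b ≠ 0`
    (hv : Xᵀ.mulVec (battn X xT Z) ≠ 0) :
    -- gradient with respect to `Y`
    (∀ i j : Fin M,
      HasDerivAt (fun s : ℝ => Jobj X xT xT1 (Y + s • Matrix.single i j 1) Z)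
        (Matrix.vecMulVec (LN (Xᵀ.mulVec (battn X xT Z)))
          (xT1 - alphaPred X xT Y Z) i j) 0) ∧
    -- gradient with respect to `Z`
    (∀ i j : Fin M,
      HasDerivAt (fun s : ℝ => Jobj X xT xT1 Y (Z + s • Matrix.single i j 1))
        (Matrix.vecMulVec xT
          ((xT1 - alphaPred X xT Y Z) ᵥ*
            (Yᵀ * ((norm2 (Xᵀ.mulVec (battn X xT Z)))⁻¹ •
                Pperp (Xᵀ.mulVec (battn X xT Z))) *
              Xᵀ * Matrix.diagonal (battn X xT Z) * X)) i j) 0) :=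
  stmt_0_general M T X xT xT1 Y Z hv
end

section
/- Fix an integer M ≥ 2 and η_Y > 0. Let h* be the discrete sequence h*(0) = 0, h*(s) = h*(s−1) + η_Y/((M−1)+exp(M·h*(s−1))) for s ≥ 1, and let h : [0,∞) → ℝ be the solution of h(0) = 0, h′(t) = η_Y/((M−1)+exp(M·h(t))). Then: (a) for every s ∈ ℕ, 0 ≤ h*(s) − h(s) ≤ 2η_Y/M; (b) h*(s) − h(s) → 0 as s → ∞. -/
open Real Filter

noncomputable def Dfun (M : ℕ) (x : ℝ) : ℝ := ((M : ℝ) - 1) + Real.exp (M * x)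

noncomputable def ffun (M : ℕ) (ηY : ℝ) (x : ℝ) : ℝ := ηY / Dfun M x

noncomputable def Phi (M : ℕ) (x : ℝ) : ℝ := ((M : ℝ) - 1) * x + Real.exp (M * x) / M

lemma hM1 {M : ℕ} (hM : 2 ≤ M) : (1:ℝ) ≤ (M:ℝ) - 1 := by
  have : (2:ℝ) ≤ (M:ℝ) := by exact_mod_cast hM
  linarith

lemma Dfun_pos {M : ℕ} (hM : 2 ≤ M) (x : ℝ) : 0 < Dfun M x := by
  have h1 := Real.exp_pos ((M:ℝ) * x)
  have h2 := hM1 hM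
  unfold Dfun; linarith

lemma Dfun_ge_exp {M : ℕ} (hM : 2 ≤ M) (x : ℝ) : Real.exp ((M:ℝ) * x) ≤ Dfun M x := by
  have h2 := hM1 hM
  unfold Dfun; linarith

lemma Dfun_mono {M : ℕ} {x y : ℝ} (hxy : x ≤ y) : Dfun M x ≤ Dfun M y := by
  unfold Dfun
  have : Real.exp ((M:ℝ)*x) ≤ Real.exp ((M:ℝ)*y) :=
    Real.exp_le_exp.2 (mul_le_mul_of_nonneg_left hxy (Nat.cast_nonneg M))
  linarith

lemma ffun_pos {M : ℕ} (hM : 2 ≤ M) {ηY : ℝ} (hη : 0 < ηY) (x : ℝ) : 0 < ffun M ηY x :=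
  div_pos hη (Dfun_pos hM x)

lemma ffun_anti {M : ℕ} (hM : 2 ≤ M) {ηY : ℝ} (hη : 0 < ηY) {x y : ℝ} (hxy : x ≤ y) :
    ffun M ηY y ≤ ffun M ηY x := by
  exact div_le_div_of_nonneg_left hη.le (Dfun_pos hM x) (Dfun_mono hxy)

lemma ffun_le_of_nonneg {M : ℕ} (hM : 2 ≤ M) {ηY : ℝ} (hη : 0 < ηY) {x : ℝ} (hx : 0 ≤ x) :
    ffun M ηY x ≤ ηY / M := by
  have h1 : (M:ℝ) ≤ Dfun M x := by
    have h3 : (1:ℝ) ≤ Real.exp ((M:ℝ)*x) := Real.one_le_exp (by positivity)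
    unfold Dfun; linarith
  have hMpos : (0:ℝ) < M := by have := hM1 hM; linarith
  exact div_le_div_of_nonneg_left hη.le hMpos h1

lemma ffun_le_eta {M : ℕ} (hM : 2 ≤ M) {ηY : ℝ} (hη : 0 < ηY) (x : ℝ) :
    ffun M ηY x ≤ ηY := by
  have h1 : (1:ℝ) ≤ Dfun M x := by
    have h3 := Real.exp_pos ((M:ℝ)*x)
    have := hM1 hM
    unfold Dfun; linarith
  calc ffun M ηY x ≤ ηY / 1 := div_le_div_of_nonneg_left hη.le one_pos h1
    _ = ηY := by norm_num

lemma Phi_hasDeriv {M : ℕ} (hM : 2 ≤ M) (x : ℝ) : HasDerivAt (Phi M) (Dfun M x) x := by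
  have hMne : (M:ℝ) ≠ 0 := by have := hM1 hM; linarith
  have h1 : HasDerivAt (fun y : ℝ => ((M:ℝ)-1) * y) ((M:ℝ)-1) x := by
    simpa using (hasDerivAt_id x).const_mul ((M:ℝ)-1)
  have h2 : HasDerivAt (fun y : ℝ => Real.exp ((M:ℝ)*y)) (Real.exp ((M:ℝ)*x) * (M:ℝ)) x := by
    simpa [Function.comp_def] using
      (Real.hasDerivAt_exp ((M:ℝ)*x)).comp x ((hasDerivAt_id x).const_mul (M:ℝ))
  have h3 := h1.add (h2.div_const (M:ℝ))
  exact h3.congr_deriv (by unfold Dfun; field_simp)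

lemma Phi_strictMono {M : ℕ} (hM : 2 ≤ M) : StrictMono (Phi M) := by
  intro x y hxy
  have h1 := hM1 (M := M) hM
  have hMpos : (0:ℝ) < M := by linarith
  have h2 : Real.exp ((M:ℝ)*x) ≤ Real.exp ((M:ℝ)*y) :=
    Real.exp_le_exp.2 (by nlinarith)
  have h3 : Real.exp ((M:ℝ)*x) / M ≤ Real.exp ((M:ℝ)*y) / M := by gcongr
  have h4 : ((M:ℝ)-1) * x < ((M:ℝ)-1) * y := by nlinarith
  unfold Phi; linarith

lemma Phi_zero {M : ℕ} : Phi M 0 = 1 / M := by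
  simp [Phi]

/-- convexity gap: `Φ y - Φ x ≥ D x · (y - x)` for `x ≤ y`. -/
lemma Phi_gap {M : ℕ} (hM : 2 ≤ M) {x y : ℝ} (hxy : x ≤ y) :
    Dfun M x * (y - x) ≤ Phi M y - Phi M x := by
  have hMpos : (0:ℝ) < M := by have := hM1 hM; linarith
  have e1 : Real.exp ((M:ℝ)*x) * (1 + (M:ℝ)*(y-x)) ≤ Real.exp ((M:ℝ)*y) := by
    have hy : (M:ℝ)*y = (M:ℝ)*x + (M:ℝ)*(y-x) := by ring
    rw [hy, Real.exp_add]
    have h1 := Real.add_one_le_exp ((M:ℝ)*(y-x))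
    have h2 := Real.exp_pos ((M:ℝ)*x)
    nlinarith
  have e2 : Real.exp ((M:ℝ)*x) * (1 + (M:ℝ)*(y-x)) / M ≤ Real.exp ((M:ℝ)*y) / M := by gcongr
  have e3 : Real.exp ((M:ℝ)*x) * (1 + (M:ℝ)*(y-x)) / M
      = Real.exp ((M:ℝ)*x) / M + Real.exp ((M:ℝ)*x) * (y-x) := by
    field_simp
  unfold Phi Dfun
  nlinarith [e2, e3]

/-- excess per step: `Φ(a + f a) - Φ a ≤ ηY + K · f a` with `K = M ηY e^{M ηY}`. -/
lemma Phi_step_excess {M : ℕ} (hM : 2 ≤ M) {ηY : ℝ} (hη : 0 < ηY) (a : ℝ) :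
    Phi M (a + ffun M ηY a) - Phi M a ≤ ηY + ((M:ℝ) * ηY * Real.exp ((M:ℝ)*ηY)) * ffun M ηY a := by
  have hMpos : (0:ℝ) < M := by have := hM1 hM; linarith
  set Δ := ffun M ηY a with hΔ
  have hΔpos : 0 < Δ := ffun_pos hM hη a
  have hΔle : Δ ≤ ηY := ffun_le_eta hM hη a
  have hDpos := Dfun_pos hM a
  have hcancel : Dfun M a * Δ = ηY := by
    rw [hΔ]; unfold ffun; field_simp
  have hexpΔ : Real.exp ((M:ℝ)*a) * Δ ≤ ηY := by
    have := Dfun_ge_exp hM a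
    nlinarith
  -- exp(MΔ) - 1 ≤ MΔ exp(MΔ)
  have hkey : Real.exp ((M:ℝ)*Δ) - 1 ≤ (M:ℝ)*Δ * Real.exp ((M:ℝ)*Δ) := by
    have h1 := Real.add_one_le_exp (-((M:ℝ)*Δ))
    have h2 := Real.exp_pos ((M:ℝ)*Δ)
    have h3 : Real.exp (-((M:ℝ)*Δ)) * Real.exp ((M:ℝ)*Δ) = 1 := by
      rw [← Real.exp_add]; simp
    nlinarith
  have hexpΔle : Real.exp ((M:ℝ)*Δ) ≤ Real.exp ((M:ℝ)*ηY) := by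
    apply Real.exp_le_exp.2
    nlinarith
  have hexpΔge : (1:ℝ) ≤ Real.exp ((M:ℝ)*Δ) := Real.one_le_exp (by positivity)
  -- main estimate on the exp part
  have hsplit : Real.exp ((M:ℝ)*(a+Δ)) = Real.exp ((M:ℝ)*a) * Real.exp ((M:ℝ)*Δ) := by
    rw [← Real.exp_add]; ring_nf
  have hkey2 : Real.exp ((M:ℝ)*a) * (Real.exp ((M:ℝ)*Δ) - 1) / M - Real.exp ((M:ℝ)*a) * Δ
      ≤ ((M:ℝ) * ηY * Real.exp ((M:ℝ)*ηY)) * Δ := by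
    have hea := Real.exp_pos ((M:ℝ)*a)
    have b1 : Real.exp ((M:ℝ)*a) * (Real.exp ((M:ℝ)*Δ) - 1) / M
        ≤ Real.exp ((M:ℝ)*a) * Δ * Real.exp ((M:ℝ)*Δ) := by
      rw [div_le_iff₀ hMpos]
      nlinarith
    have b2 : Real.exp ((M:ℝ)*a) * Δ * Real.exp ((M:ℝ)*Δ) - Real.exp ((M:ℝ)*a) * Δ
        = Real.exp ((M:ℝ)*a) * Δ * (Real.exp ((M:ℝ)*Δ) - 1) := by ring
    have b3 : Real.exp ((M:ℝ)*a) * Δ * (Real.exp ((M:ℝ)*Δ) - 1) ≤ ηY * (Real.exp ((M:ℝ)*Δ) - 1) := by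
      have : (0:ℝ) ≤ Real.exp ((M:ℝ)*Δ) - 1 := by linarith
      nlinarith
    have b4 : ηY * (Real.exp ((M:ℝ)*Δ) - 1) ≤ ηY * ((M:ℝ)*Δ * Real.exp ((M:ℝ)*Δ)) := by
      nlinarith
    have b5 : ηY * ((M:ℝ)*Δ * Real.exp ((M:ℝ)*Δ)) ≤ ((M:ℝ) * ηY * Real.exp ((M:ℝ)*ηY)) * Δ := by
      nlinarith [mul_le_mul_of_nonneg_left hexpΔle
        (by positivity : (0:ℝ) ≤ (M:ℝ)*ηY*Δ)]
    linarith
  have hPhi : Phi M (a+Δ) - Phi M a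
      = ((M:ℝ)-1)*Δ + Real.exp ((M:ℝ)*a) * (Real.exp ((M:ℝ)*Δ) - 1) / M := by
    unfold Phi
    rw [hsplit]
    field_simp
    ring
  have hD : ((M:ℝ)-1)*Δ + Real.exp ((M:ℝ)*a) * Δ = ηY := by
    have : (((M:ℝ)-1) + Real.exp ((M:ℝ)*a)) * Δ = ηY := hcancel
    nlinarith [this]
  linarith [hkey2, hPhi.le, hPhi.ge]

/-- Let `h*` be the discrete recursion `h*(0) = 0`,
`h*(s) = h*(s−1) + η_Y/((M−1)+exp(M·h*(s−1)))` and let `h` solve the continuous counterpart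
`h(0) = 0`, `h′(t) = η_Y/((M−1)+exp(M·h(t)))`.  Then (a) `0 ≤ h*(s) − h(s) ≤ 2η_Y/M` for every
`s ∈ ℕ`, and (b) `h*(s) − h(s) → 0` as `s → ∞`. -/
theorem stmt_6 (M : ℕ) (hM : 2 ≤ M) (ηY : ℝ) (hη : 0 < ηY)
    (hstar : ℕ → ℝ) (h : ℝ → ℝ)
    (hh0 : hstar 0 = 0)
    (hhrec : ∀ s : ℕ, 1 ≤ s →
      hstar s = hstar (s - 1) + ηY / (((M : ℝ) - 1) + Real.exp (M * hstar (s - 1))))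
    (h0 : h 0 = 0)
    (hderiv : ∀ t : ℝ, 0 ≤ t →
      HasDerivAt h (ηY / (((M : ℝ) - 1) + Real.exp (M * h t))) t) :
    (∀ s : ℕ, 0 ≤ hstar s - h s ∧ hstar s - h s ≤ 2 * ηY / M) ∧
      Tendsto (fun s : ℕ => hstar s - h s) atTop (nhds 0) := by
  have h1M := hM1 hM
  have hMpos : (0:ℝ) < M := by linarith
  have hMne : (M:ℝ) ≠ 0 := hMpos.ne'
  -- the recursion in closed form
  have hrec : ∀ s : ℕ, hstar (s+1) = hstar s + ffun M ηY (hstar s) := by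
    intro s
    have := hhrec (s+1) (by omega)
    simpa [ffun, Dfun] using this
  have hstar_nonneg : ∀ s : ℕ, 0 ≤ hstar s := by
    intro s
    induction s with
    | zero => simp [hh0]
    | succ n ih =>
      have := ffun_pos hM hη (hstar n)
      rw [hrec n]; linarith
  -- continuity and monotonicity of h
  have hderiv' : ∀ t : ℝ, 0 ≤ t → HasDerivAt h (ffun M ηY (h t)) t := hderiv
  have hcont : ContinuousOn h (Set.Ici (0:ℝ)) :=
    fun t ht => (hderiv' t ht).continuousAt.continuousWithinAt
  have hmono : MonotoneOn h (Set.Ici (0:ℝ)) := by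
    have hsm : StrictMonoOn h (Set.Ici (0:ℝ)) := by
      apply strictMonoOn_of_deriv_pos (convex_Ici 0) hcont
      intro x hx
      rw [interior_Ici] at hx
      rw [(hderiv' x (le_of_lt hx)).deriv]
      exact ffun_pos hM hη _
    exact hsm.monotoneOn
  have h_nonneg : ∀ t : ℝ, 0 ≤ t → 0 ≤ h t := by
    intro t ht
    have := hmono Set.self_mem_Ici ht ht
    rwa [h0] at this
  -- mean value theorem on each unit interval
  have hstep : ∀ s : ℕ, ∃ c ∈ Set.Ioo ((s:ℝ)) ((s:ℝ)+1),
      h ((s:ℝ)+1) - h s = ffun M ηY (h c) := by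
    intro s
    have hab : (s:ℝ) < (s:ℝ)+1 := by linarith
    obtain ⟨c, hc, hceq⟩ := exists_hasDerivAt_eq_slope h (fun t => ffun M ηY (h t)) hab
      (hcont.mono (fun x hx => le_trans (Nat.cast_nonneg s) hx.1))
      (fun x hx => hderiv' x (le_trans (Nat.cast_nonneg s) hx.1.le))
    refine ⟨c, hc, ?_⟩
    have h1 : ((s:ℝ)+1) - s = 1 := by ring
    rw [h1, div_one] at hceq
    exact hceq.symm
  -- the conserved quantity along h
  have hkey : ∀ t : ℝ, 0 ≤ t → Phi M (h t) = ηY * t + 1 / M := by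
    intro t ht
    set g : ℝ → ℝ := fun u => Phi M (h u) - ηY * u with hgdef
    have hgderiv : ∀ u : ℝ, 0 ≤ u → HasDerivAt g 0 u := by
      intro u hu
      have h1 : HasDerivAt (fun v => Phi M (h v)) (Dfun M (h u) * ffun M ηY (h u)) u :=
        (Phi_hasDeriv hM (h u)).comp u (hderiv' u hu)
      have h2 : Dfun M (h u) * ffun M ηY (h u) = ηY := by
        have := Dfun_pos hM (h u)
        unfold ffun
        field_simp
      have h3 : HasDerivAt (fun v : ℝ => ηY * v) ηY u := by
        simpa using (hasDerivAt_id u).const_mul ηY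
      have h4 := h1.sub h3
      rw [h2] at h4
      simp only [sub_self] at h4; exact h4
    have hgcont : ContinuousOn g (Set.Icc 0 t) :=
      fun u hu => (hgderiv u hu.1).continuousAt.continuousWithinAt
    have hconst := constant_of_has_deriv_right_zero hgcont
      (fun u hu => (hgderiv u hu.1).hasDerivWithinAt) t (Set.right_mem_Icc.2 ht)
    have hg0 : g 0 = 1 / M := by
      simp [hgdef, h0, Phi_zero]
    have : Phi M (h t) - ηY * t = 1 / M := by rw [← hg0]; exact hconst
    linarith
  -- lower bound : Φ(h* s) ≥ ηY s + 1/M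
  have hlow : ∀ s : ℕ, ηY * s + 1 / M ≤ Phi M (hstar s) := by
    intro s
    induction s with
    | zero => simp [hh0, Phi_zero]
    | succ n ih =>
      have hgap := Phi_gap hM (le_add_of_nonneg_right (ffun_pos hM hη (hstar n)).le :
        hstar n ≤ hstar n + ffun M ηY (hstar n))
      have hcancel : Dfun M (hstar n) * (hstar n + ffun M ηY (hstar n) - hstar n) = ηY := by
        have := Dfun_pos hM (hstar n)
        unfold ffun
        field_simp
        ring
      rw [hcancel] at hgap
      rw [hrec n]
      push_cast
      linarith
  have hsl : ∀ s : ℕ, h s ≤ hstar s := by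
    intro s
    have hk := hkey s (Nat.cast_nonneg s)
    have hls := hlow s
    rw [← hk] at hls
    exact ((Phi_strictMono hM).le_iff_le).mp hls
  -- continuous unit step is at most ηY / M
  have hstep_le : ∀ s : ℕ, h ((s:ℝ)+1) - h s ≤ ηY / M := by
    intro s
    obtain ⟨c, hc, hceq⟩ := hstep s
    have hc0 : (0:ℝ) ≤ c := le_trans (Nat.cast_nonneg s) hc.1.le
    rw [hceq]
    exact ffun_le_of_nonneg hM hη (h_nonneg c hc0)
  have hcast : ∀ n : ℕ, ((n+1 : ℕ):ℝ) = (n:ℝ)+1 := by intro n; push_cast; ring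
  -- upper bound invariant : hstar s - h s ≤ ηY / M
  have hup : ∀ s : ℕ, hstar s - h s ≤ ηY / M := by
    intro s
    induction s with
    | zero =>
      rw [hh0]; push_cast; rw [h0]
      have : (0:ℝ) ≤ ηY / M := by positivity
      linarith
    | succ n ih =>
      obtain ⟨c, hc, hceq⟩ := hstep n
      have hcn : (0:ℝ) ≤ (n:ℝ) := Nat.cast_nonneg n
      have hc0 : (0:ℝ) ≤ c := le_trans hcn hc.1.le
      have hhc_le : h c ≤ h ((n:ℝ)+1) := hmono hc0 (by simp; linarith) hc.2.le
      rw [hrec n, hcast n]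
      by_cases hcase : hstar n ≤ h ((n:ℝ)+1)
      · have k1 : ffun M ηY (hstar n) ≤ ηY / M :=
          ffun_le_of_nonneg hM hη (hstar_nonneg n)
        linarith
      · push_neg at hcase
        have k1 : ffun M ηY (hstar n) ≤ ffun M ηY (h c) :=
          ffun_anti hM hη (by linarith)
        linarith [hceq.ge, hceq.le, ih]
  -- part (a)
  have parta : ∀ s : ℕ, 0 ≤ hstar s - h s ∧ hstar s - h s ≤ 2 * ηY / M := by
    intro s
    constructor
    · have := hsl s; linarith
    · have h1 := hup s
      have h2 : ηY / M ≤ 2 * ηY / M := by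
        gcongr
        linarith
      linarith
  refine ⟨parta, ?_⟩
  -- part (b)
  set K : ℝ := (M:ℝ) * ηY * Real.exp ((M:ℝ)*ηY) with hKdef
  have hKpos : 0 < K := by positivity
  -- excess bound Φ(h* n) ≤ ηY n + 1/M + K h* n
  have hE : ∀ n : ℕ, Phi M (hstar n) ≤ ηY * n + 1 / M + K * hstar n := by
    intro n
    induction n with
    | zero => simp [hh0, Phi_zero]
    | succ n ih =>
      have hex := Phi_step_excess hM hη (hstar n)
      rw [hrec n]
      push_cast
      nlinarith [ih, hex, hKpos, ffun_pos hM hη (hstar n)]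
  -- hence hstar n - h n ≤ K (h n + ηY/M) / D(h n) ≤ K (h n + ηY/M) exp (-(h n))
  have hbound : ∀ n : ℕ, hstar n - h n ≤ K * (h n + ηY / M) * Real.exp (-(h n)) := by
    intro n
    have hn0 : (0:ℝ) ≤ (n:ℝ) := Nat.cast_nonneg n
    have hhn := h_nonneg n hn0
    have hgap := Phi_gap hM (hsl n)
    have hkeyn := hkey n hn0
    have hEn := hE n
    have h1 : Dfun M (h n) * (hstar n - h n) ≤ K * hstar n := by
      have : Phi M (hstar n) - Phi M (h n) ≤ K * hstar n := by
        rw [hkeyn]; linarith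
      linarith
    have h2 : K * hstar n ≤ K * (h n + ηY / M) := by
      have := hup n
      nlinarith
    have hDn := Dfun_pos hM (h n)
    have h3 : hstar n - h n ≤ K * (h n + ηY / M) / Dfun M (h n) := by
      rw [le_div_iff₀ hDn]
      calc (hstar n - h n) * Dfun M (h n) = Dfun M (h n) * (hstar n - h n) := by ring
        _ ≤ K * hstar n := h1
        _ ≤ K * (h n + ηY / M) := h2
    have h4 : Real.exp (h n) ≤ Dfun M (h n) := by
      have := Dfun_ge_exp hM (h n)
      have hmm : Real.exp (h n) ≤ Real.exp ((M:ℝ) * h n) := by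
        apply Real.exp_le_exp.2
        nlinarith
      linarith
    have h5 : K * (h n + ηY / M) / Dfun M (h n) ≤ K * (h n + ηY / M) / Real.exp (h n) := by
      apply div_le_div_of_nonneg_left ?_ (Real.exp_pos _) h4
      positivity
    have h6 : K * (h n + ηY / M) / Real.exp (h n) = K * (h n + ηY / M) * Real.exp (-(h n)) := by
      rw [Real.exp_neg]
      ring
    linarith [h3, h5, h6.le, h6.ge]
  -- h (n) → ∞
  have htop : Tendsto (fun s : ℕ => h s) atTop atTop := by
    rw [tendsto_atTop]
    intro B
    have h1 : Tendsto (fun s : ℕ => ηY * s + 1 / M) atTop atTop := by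
      apply tendsto_atTop_add_const_right
      exact Tendsto.const_mul_atTop hη tendsto_natCast_atTop_atTop
    filter_upwards [h1.eventually_ge_atTop (Phi M B)] with s hs
    have hk := hkey s (Nat.cast_nonneg s)
    apply ((Phi_strictMono hM).le_iff_le).mp
    rw [hk]
    exact hs
  -- the bounding function tends to 0
  have hglim : Tendsto (fun x : ℝ => K * (x + ηY / M) * Real.exp (-x)) atTop (nhds 0) := by
    have t1 : Tendsto (fun x : ℝ => x * Real.exp (-x)) atTop (nhds 0) := by
      simpa using Real.tendsto_pow_mul_exp_neg_atTop_nhds_zero 1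
    have t2 : Tendsto (fun x : ℝ => Real.exp (-x)) atTop (nhds 0) :=
      Real.tendsto_exp_neg_atTop_nhds_zero
    have t3 : Tendsto (fun x : ℝ => K * (x * Real.exp (-x)) + (K * (ηY / M)) * Real.exp (-x))
        atTop (nhds (K * 0 + (K * (ηY / M)) * 0)) :=
      (t1.const_mul K).add (t2.const_mul (K * (ηY / M)))
    simp only [mul_zero, add_zero] at t3
    convert t3 using 2 with x
    ring
  have hblim : Tendsto (fun n : ℕ => K * (h n + ηY / M) * Real.exp (-(h n))) atTop (nhds 0) :=
    hglim.comp htop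
  exact tendsto_of_tendsto_of_tendsto_of_le_of_le tendsto_const_nhds hblim
    (fun n => (parta n).1) hbound
end

section
/- Let M ≥ 100 be an integer, 0 < η_Y < 1, and let h : [0,∞) → ℝ solve h(0) = 0, h′(t) = η_Y/((M−1)+exp(M·h(t))). Then: (i) for all 0 ≤ t ≤ (ln M)/η_Y one has h(t) < ln(M−1)/M, hence exp(M·h(t)) < M−1; if moreover η_Y ≥ M^{−0.9} and t ≥ 1, then also exp(M·h(t)) ≤ (M−1)·M·h(t); (ii) for all t ≥ 2(1+ω₁)(ln M)/η_Y, where ω₁ ∈ (0,1) is the constant with M^{ω₁} = (1+ω₁)·ln(M)·(M−1)/M, one has exp(M·h(t)) > (M−1)·M·h(t) and exp(M·h(t)) > M−1. -/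
open Real

-- endgame of part (i)(b), fully abstract
lemma stmt8_aux1 (M e s x E : ℝ) (hM : 100 ≤ M) (he2 : 2 < e) (he3 : e < 2.72)
    (hx0 : 0 ≤ x) (hs : 1.58 ≤ s) (hk : E + (M - 1) * x = s + 1) (hlt : E < M - 1)
    (hcx : x ≤ 1 → E ≤ 1 - x + x * e) : E ≤ (M - 1) * x := by
  rcases le_or_gt 1 x with hx1 | hx1
  · nlinarith
  · have hc := hcx hx1.le
    have hP : 1.58 ≤ (M + e - 2) * x := by nlinarith
    nlinarith [mul_nonneg (show (0:ℝ) ≤ M - e by linarith)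
        (show (0:ℝ) ≤ (M + e - 2) * x - 1.58 by linarith),
      mul_nonneg (show (0:ℝ) ≤ M - e by linarith) hx0]

-- endgame of part (ii), abstract
lemma stmt8_aux2 (M x x₂ : ℝ) (hM : 100 ≤ M) (hx₂1 : 1 ≤ x₂) (hgt : x₂ < x)
    (hx₂e : Real.exp x₂ = (M - 1) * x₂) : (M - 1) * x < Real.exp x := by
  have hlt : (x - x₂) + 1 < Real.exp (x - x₂) := Real.add_one_lt_exp (by linarith)
  have hmul : Real.exp x = ((M - 1) * x₂) * Real.exp (x - x₂) := by
    rw [← hx₂e, ← Real.exp_add]; ring_nf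
  have hq : (0:ℝ) < (M - 1) * x₂ := by nlinarith
  have h5 : ((M - 1) * x₂) * ((x - x₂) + 1) < ((M - 1) * x₂) * Real.exp (x - x₂) :=
    mul_lt_mul_of_pos_left hlt hq
  nlinarith [mul_nonneg (mul_nonneg (show (0:ℝ) ≤ M - 1 by linarith)
      (show (0:ℝ) ≤ x₂ - 1 by linarith)) (show (0:ℝ) ≤ x - x₂ by linarith)]

-- numeric lemma M^{0.1} ≥ 1.58
lemma stmt8_aux3 (M : ℝ) (hM : 100 ≤ M) : (1.58:ℝ) ≤ M ^ (0.1:ℝ) := by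
  have hMpos : (0:ℝ) < M := by linarith
  by_contra hcon
  push_neg at hcon
  have hp : (M ^ (0.1:ℝ)) ^ (10:ℕ) < (1.58:ℝ) ^ (10:ℕ) :=
    pow_lt_pow_left₀ hcon (Real.rpow_nonneg hMpos.le _) (by norm_num)
  rw [← Real.rpow_natCast (M ^ (0.1:ℝ)) 10, ← Real.rpow_mul hMpos.le] at hp
  norm_num at hp
  linarith

set_option maxHeartbeats 2000000 in
/-- Two-phase behaviour of the solution `h` of the decoder ODE
`h(0) = 0`, `h′(t) = η_Y/((M−1)+exp(M·h(t)))` for `M ≥ 100` and `0 < η_Y < 1`: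
(i) for `0 ≤ t ≤ (ln M)/η_Y` one has `h(t) < ln(M−1)/M` (hence `exp(M·h(t)) < M−1`), and if
moreover `η_Y ≥ M^{−0.9}` and `t ≥ 1` then also `exp(M·h(t)) ≤ (M−1)·M·h(t)`;
(ii) for `t ≥ 2(1+ω₁)(ln M)/η_Y`, where `ω₁ ∈ (0,1)` satisfies
`M^{ω₁} = (1+ω₁)·ln(M)·(M−1)/M`, one has `exp(M·h(t)) > (M−1)·M·h(t)` and
`exp(M·h(t)) > M−1`. -/
theorem stmt_8 (M : ℕ) (hM : 100 ≤ M) (ηY : ℝ) (hη0 : 0 < ηY) (hη1 : ηY < 1)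
    (h : ℝ → ℝ) (h0 : h 0 = 0)
    (hderiv : ∀ t : ℝ, 0 ≤ t →
      HasDerivAt h (ηY / (((M : ℝ) - 1) + Real.exp (M * h t))) t) :
    -- (i)
    (∀ t : ℝ, 0 ≤ t → t ≤ Real.log M / ηY →
      (h t < Real.log ((M : ℝ) - 1) / M ∧ Real.exp (M * h t) < (M : ℝ) - 1) ∧
      (ηY ≥ (M : ℝ) ^ (-(0.9 : ℝ)) → 1 ≤ t →
        Real.exp (M * h t) ≤ ((M : ℝ) - 1) * M * h t)) ∧
    -- (ii)
    (∀ ω₁ : ℝ, 0 < ω₁ → ω₁ < 1 →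
      (M : ℝ) ^ ω₁ = (1 + ω₁) * Real.log M * ((M : ℝ) - 1) / M →
      ∀ t : ℝ, 2 * (1 + ω₁) * Real.log M / ηY ≤ t →
        Real.exp (M * h t) > ((M : ℝ) - 1) * M * h t ∧
        Real.exp (M * h t) > (M : ℝ) - 1) := by
  have hM100 : (100:ℝ) ≤ (M:ℝ) := by exact_mod_cast hM
  have hMpos : (0:ℝ) < (M:ℝ) := by linarith
  have hM1pos : (0:ℝ) < (M:ℝ) - 1 := by linarith
  have hlogM1 : 1 < Real.log M := by
    rw [Real.lt_log_iff_exp_lt hMpos]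
    have := Real.exp_one_lt_d9
    linarith
  -- key identity
  have key : ∀ t : ℝ, 0 ≤ t →
      Real.exp (M * h t) + ((M:ℝ) - 1) * M * h t = M * ηY * t + 1 := by
    have hφd : ∀ x : ℝ, 0 ≤ x → HasDerivAt
        (fun s => Real.exp (M * h s) + ((M:ℝ) - 1) * M * h s - ((M:ℝ) * ηY * s + 1)) 0 x := by
      intro x hx
      have hd := hderiv x hx
      have hden : (0:ℝ) < ((M:ℝ) - 1) + Real.exp (M * h x) := by
        nlinarith [Real.exp_pos (M * h x)]
      have h1 : HasDerivAt (fun s => Real.exp ((M:ℝ) * h s))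
          (Real.exp ((M:ℝ) * h x) * ((M:ℝ) * (ηY / (((M : ℝ) - 1) + Real.exp (M * h x))))) x :=
        (hd.const_mul (M:ℝ)).exp
      have h2 : HasDerivAt (fun s => ((M:ℝ) - 1) * M * h s)
          (((M:ℝ) - 1) * M * (ηY / (((M : ℝ) - 1) + Real.exp (M * h x)))) x := by
        have := hd.const_mul (((M:ℝ) - 1) * (M:ℝ))
        simpa [mul_assoc] using this
      have h3 : HasDerivAt (fun s : ℝ => (M:ℝ) * ηY * s + 1) ((M:ℝ) * ηY) x := by
        simpa using ((hasDerivAt_id x).const_mul ((M:ℝ) * ηY)).add_const (1:ℝ)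
      have h4 := (h1.add h2).sub h3
      refine h4.congr_deriv ?_
      have hD : ((M:ℝ) - 1) + Real.exp (M * h x) ≠ 0 := hden.ne'
      have e : ηY / (((M:ℝ) - 1) + Real.exp (M * h x)) * (((M:ℝ) - 1) + Real.exp (M * h x)) = ηY :=
        div_mul_cancel₀ _ hD
      linear_combination (M:ℝ) * e
    intro t ht
    rcases eq_or_lt_of_le ht with rfl | ht'
    · simp [h0]
    · have := constant_of_has_deriv_right_zero
        (f := fun s => Real.exp (M * h s) + ((M:ℝ) - 1) * M * h s - ((M:ℝ) * ηY * s + 1))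
        (a := 0) (b := t)
        (fun x hx => ((hφd x hx.1).continuousAt.continuousWithinAt))
        (fun x hx => (hφd x hx.1).hasDerivWithinAt) t (Set.right_mem_Icc.2 ht)
      simp [h0] at this
      linarith
  -- nonnegativity of h
  have hpos0 : ∀ t : ℝ, 0 ≤ t → 0 ≤ h t := by
    intro t ht
    by_contra hcon
    push_neg at hcon
    have hx : (M:ℝ) * h t < 0 := mul_neg_of_pos_of_neg hMpos hcon
    have he : Real.exp ((M:ℝ) * h t) < 1 := by
      rw [Real.exp_lt_one_iff]; exact hx
    have hk := key t ht
    have : (0:ℝ) ≤ M * ηY * t := by positivity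
    nlinarith
  constructor
  · -- part (i)
    intro t ht ht2
    have hk := key t ht
    have hst : (M:ℝ) * ηY * t ≤ (M:ℝ) * Real.log M := by
      have : ηY * t ≤ Real.log M := by
        rw [le_div_iff₀ hη0] at ht2; linarith [ht2]
      nlinarith
    have hsqrt10 : (10:ℝ) ≤ Real.sqrt M := by
      have : Real.sqrt 100 ≤ Real.sqrt M := Real.sqrt_le_sqrt hM100
      rwa [show (100:ℝ) = 10^2 by norm_num, Real.sqrt_sq (by norm_num : (0:ℝ) ≤ 10)] at this
    have hsq : Real.sqrt M * Real.sqrt M = (M:ℝ) := Real.mul_self_sqrt hMpos.le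
    have hlogle : Real.log M ≤ 2 * (Real.sqrt M - 1) := by
      have h1 : Real.log (Real.sqrt M) ≤ Real.sqrt M - 1 :=
        Real.log_le_sub_one_of_pos (by positivity)
      have h2 : Real.log (Real.sqrt M) = Real.log M / 2 := Real.log_sqrt hMpos.le
      linarith [h1, h2.symm.le, h2.le]
    have hdiff : ((M:ℝ) - 1) * (Real.log M - Real.log ((M:ℝ) - 1)) ≤ 1 := by
      have h1 : Real.log ((M:ℝ)/((M:ℝ)-1)) ≤ (M:ℝ)/((M:ℝ)-1) - 1 :=
        Real.log_le_sub_one_of_pos (by positivity)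
      rw [Real.log_div (by linarith) (by linarith)] at h1
      have h2 : (M:ℝ)/((M:ℝ)-1) - 1 = 1/((M:ℝ)-1) := by field_simp; ring
      rw [h2] at h1
      calc ((M:ℝ) - 1) * (Real.log M - Real.log ((M:ℝ) - 1))
          ≤ ((M:ℝ) - 1) * (1/((M:ℝ)-1)) := by
            apply mul_le_mul_of_nonneg_left h1 hM1pos.le
        _ = 1 := by field_simp
    have hA : (M:ℝ) * Real.log M + 1 < ((M:ℝ) - 1) + ((M:ℝ) - 1) * Real.log ((M:ℝ) - 1) := by
      nlinarith [hsqrt10, hsq, hlogle, hdiff]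
    have hia : h t < Real.log ((M : ℝ) - 1) / M := by
      by_contra hcon
      push_neg at hcon
      have hx : Real.log ((M:ℝ) - 1) ≤ (M:ℝ) * h t := by
        rw [div_le_iff₀ hMpos] at hcon; linarith
      have he : ((M:ℝ) - 1) ≤ Real.exp ((M:ℝ) * h t) := by
        calc ((M:ℝ) - 1) = Real.exp (Real.log ((M:ℝ)-1)) := (Real.exp_log hM1pos).symm
          _ ≤ Real.exp ((M:ℝ) * h t) := Real.exp_le_exp.2 hx
      nlinarith
    have hib : Real.exp (M * h t) < (M : ℝ) - 1 := by
      have hx : (M:ℝ) * h t < Real.log ((M:ℝ) - 1) := by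
        have := (lt_div_iff₀ hMpos).1 hia
        linarith
      calc Real.exp ((M:ℝ) * h t) < Real.exp (Real.log ((M:ℝ)-1)) := Real.exp_lt_exp.2 hx
        _ = (M:ℝ) - 1 := Real.exp_log hM1pos
    refine ⟨⟨hia, hib⟩, ?_⟩
    intro hηb hT1
    have hx0 : 0 ≤ (M:ℝ) * h t := mul_nonneg hMpos.le (hpos0 t ht)
    have hs158 : (1.58:ℝ) ≤ (M:ℝ) * ηY * t := by
      have hpow : (M:ℝ) * (M:ℝ) ^ (-(0.9:ℝ)) = (M:ℝ) ^ (0.1:ℝ) := by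
        have : (M:ℝ) ^ (0.1:ℝ) = (M:ℝ) ^ ((1:ℝ) + (-(0.9:ℝ))) := by norm_num
        rw [this, Real.rpow_add hMpos, Real.rpow_one]
      have h1 : (M:ℝ) ^ (0.1:ℝ) ≤ (M:ℝ) * ηY := by
        rw [← hpow]
        exact mul_le_mul_of_nonneg_left hηb hMpos.le
      have h2 : (1.58:ℝ) ≤ (M:ℝ) ^ (0.1:ℝ) := stmt8_aux3 (M:ℝ) hM100
      have hMη : (0:ℝ) ≤ (M:ℝ) * ηY := by positivity
      calc (1.58:ℝ) ≤ (M:ℝ) * ηY := le_trans h2 h1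
        _ = (M:ℝ) * ηY * 1 := by ring
        _ ≤ (M:ℝ) * ηY * t := by
            exact mul_le_mul_of_nonneg_left hT1 hMη
    have he2 : (2:ℝ) < Real.exp 1 := by
      have := Real.exp_one_gt_d9; linarith
    have he3 : Real.exp 1 < 2.72 := by
      have := Real.exp_one_lt_d9; linarith
    have hcx : (M:ℝ) * h t ≤ 1 → Real.exp ((M:ℝ) * h t) ≤
        1 - (M:ℝ) * h t + ((M:ℝ) * h t) * Real.exp 1 := by
      intro hx1
      have := convexOn_exp.2 (Set.mem_univ (0:ℝ)) (Set.mem_univ (1:ℝ))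
        (by linarith : (0:ℝ) ≤ 1 - (M:ℝ) * h t) hx0 (by ring)
      simpa using this
    have := stmt8_aux1 (M:ℝ) (Real.exp 1) ((M:ℝ) * ηY * t) ((M:ℝ) * h t)
      (Real.exp ((M:ℝ) * h t)) hM100 he2 he3 hx0 hs158 (by linarith [hk]; ) hib hcx
    linarith [this]
  · -- part (ii)
    intro ω₁ hω0 hω1 hωeq t htt
    have ht0 : (0:ℝ) ≤ t := by
      have : (0:ℝ) < 2 * (1 + ω₁) * Real.log M / ηY := by positivity
      linarith
    have hk := key t ht0
    set x₂ : ℝ := (1 + ω₁) * Real.log M with hx₂def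
    have hx₂e : Real.exp x₂ = ((M:ℝ) - 1) * x₂ := by
      have h1 : Real.exp x₂ = (M:ℝ) ^ ((1:ℝ) + ω₁) := by
        rw [Real.rpow_def_of_pos hMpos]; ring_nf
        rw [hx₂def]; ring_nf
      rw [h1, Real.rpow_add hMpos, Real.rpow_one, hωeq]
      field_simp
    have hx₂1 : 1 ≤ x₂ := by nlinarith
    have hs : 2 * (1 + ω₁) * (M:ℝ) * Real.log M ≤ (M:ℝ) * ηY * t := by
      have h1 : 2 * (1 + ω₁) * Real.log M ≤ ηY * t := by
        rw [div_le_iff₀ hη0] at htt; linarith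
      nlinarith
    have hgt : x₂ < (M:ℝ) * h t := by
      by_contra hcon
      push_neg at hcon
      have he : Real.exp ((M:ℝ) * h t) ≤ Real.exp x₂ := Real.exp_le_exp.2 hcon
      have hlin : ((M:ℝ) - 1) * ((M:ℝ) * h t) ≤ ((M:ℝ) - 1) * x₂ :=
        mul_le_mul_of_nonneg_left hcon hM1pos.le
      rw [hx₂e] at he
      have hF : (M:ℝ) * ηY * t + 1 ≤ 2 * (((M:ℝ) - 1) * x₂) := by linarith
      have hωL : (0:ℝ) < ω₁ * Real.log M :=
        mul_pos hω0 (by linarith : (0:ℝ) < Real.log M)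
      rw [hx₂def] at hF
      nlinarith [hF, hs, hωL, hlogM1]
    have hmain := stmt8_aux2 (M:ℝ) ((M:ℝ) * h t) x₂ hM100 hx₂1 hgt hx₂e
    refine ⟨by linarith [hmain], ?_⟩
    have he : Real.exp x₂ < Real.exp ((M:ℝ) * h t) := Real.exp_lt_exp.2 hgt
    have h6 : ((M:ℝ) - 1) * 1 ≤ ((M:ℝ) - 1) * x₂ := mul_le_mul_of_nonneg_left hx₂1 hM1pos.le
    linarith [he, hx₂e, h6]
end

section
/- Let h : [0,∞) → ℝ be differentiable with h(0) = 0 and with derivative h′ positive and nonincreasing. Then for all real numbers x, Δ with 0 ≤ Δ < x, and every y with |y − x| ≤ Δ, one has |h(y) − h(x)| ≤ h(x)·Δ/(x − Δ). -/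
open Real

lemma stmt_9_mvt (h h' : ℝ → ℝ)
    (hderiv : ∀ t : ℝ, 0 ≤ t → HasDerivAt h (h' t) t)
    (hmono : ∀ s t : ℝ, 0 ≤ s → s ≤ t → h' t ≤ h' s)
    {a b : ℝ} (ha : 0 ≤ a) (hab : a ≤ b) :
    h' b * (b - a) ≤ h b - h a ∧ h b - h a ≤ h' a * (b - a) := by
  rcases eq_or_lt_of_le hab with rfl | hlt
  · simp
  · obtain ⟨c, hc, hceq⟩ := exists_hasDerivAt_eq_slope h h' hlt
      (fun t ht => ((hderiv t (ha.trans ht.1)).continuousAt).continuousWithinAt)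
      (fun t ht => hderiv t (ha.trans ht.1.le))
    have hba : (0:ℝ) ≤ b - a := by linarith
    have heq : h b - h a = h' c * (b - a) := by
      rw [hceq, div_mul_cancel₀ _ (by linarith : b - a ≠ 0)]
    constructor
    · rw [heq]
      exact mul_le_mul_of_nonneg_right (hmono c b (ha.trans hc.1.le) hc.2.le) hba
    · rw [heq]
      exact mul_le_mul_of_nonneg_right (hmono a c ha hc.1.le) hba

/-- Let `h : [0,∞) → ℝ` be differentiable with `h 0 = 0` and with derivative
`h'` positive and nonincreasing on `[0,∞)`.  Then for all reals `x, Δ` with `0 ≤ Δ < x`, and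
every `y` with `|y − x| ≤ Δ`, one has `|h y − h x| ≤ h x · Δ / (x − Δ)`. -/
theorem stmt_9 (h h' : ℝ → ℝ) (h0 : h 0 = 0)
    (hderiv : ∀ t : ℝ, 0 ≤ t → HasDerivAt h (h' t) t)
    (hpos : ∀ t : ℝ, 0 ≤ t → 0 < h' t)
    (hmono : ∀ s t : ℝ, 0 ≤ s → s ≤ t → h' t ≤ h' s) :
    ∀ x Δ y : ℝ, 0 ≤ Δ → Δ < x → |y - x| ≤ Δ →
      |h y - h x| ≤ h x * Δ / (x - Δ) := by
  intro x Δ y hΔ hΔx hy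
  have hxΔ : 0 ≤ x - Δ := by linarith
  have hxΔpos : 0 < x - Δ := by linarith
  have hy1 : x - Δ ≤ y := by
    have := abs_le.mp hy; linarith [this.1]
  have hy2 : y ≤ x + Δ := by
    have := abs_le.mp hy; linarith [this.2]
  have hy0 : 0 ≤ y := hxΔ.trans hy1
  -- h x ≥ (x - Δ) * h' (x - Δ)
  have hlow : h' (x - Δ) * (x - Δ) ≤ h x := by
    have h1 := (stmt_9_mvt h h' hderiv hmono le_rfl hxΔ).1
    have h2 := (stmt_9_mvt h h' hderiv hmono hxΔ (by linarith : x - Δ ≤ x)).1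
    have hpos' := (hpos x (by linarith)).le
    rw [h0] at h1
    nlinarith
  -- main bound : |h y - h x| ≤ h' (x - Δ) * Δ
  have hbound : |h y - h x| ≤ h' (x - Δ) * Δ
  · rcases le_total y x with hyx | hyx
    · have h1 := (stmt_9_mvt h h' hderiv hmono hy0 hyx)
      have hmle : h' y ≤ h' (x - Δ) := hmono _ _ hxΔ hy1
      have hn1 : (0:ℝ) ≤ h' x * (x - y) :=
        mul_nonneg (hpos x (by linarith)).le (by linarith)
      have hn2 : h' y * (x - y) ≤ h' (x - Δ) * Δ :=
        mul_le_mul hmle (by linarith) (by linarith) (hpos _ hxΔ).le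
      rw [abs_sub_comm, abs_of_nonneg (by linarith [h1.1] : 0 ≤ h x - h y)]
      linarith [h1.2]
    · have h1 := (stmt_9_mvt h h' hderiv hmono (by linarith : (0:ℝ) ≤ x) hyx)
      have hmle : h' x ≤ h' (x - Δ) := hmono _ _ hxΔ (by linarith)
      have hn1 : (0:ℝ) ≤ h' y * (y - x) :=
        mul_nonneg (hpos y hy0).le (by linarith)
      have hn2 : h' x * (y - x) ≤ h' (x - Δ) * Δ :=
        mul_le_mul hmle (by linarith) (by linarith) (hpos _ hxΔ).le
      rw [abs_of_nonneg (by linarith [h1.1] : 0 ≤ h y - h x)]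
      linarith [h1.2]
  refine hbound.trans ?_
  rw [div_eq_mul_inv, mul_assoc, mul_comm Δ, ← mul_assoc]
  refine mul_le_mul_of_nonneg_right ?_ hΔ
  rw [← div_eq_mul_inv, le_div_iff₀ hxΔpos]
  exact hlow
end

section
/- Let E ∈ ℝ^{K×K} be real symmetric with zero diagonal (E_{ii} = 0 for all i) and eigenvalues λ_k with |λ_k| < 1, and let E' := I − (I+E)^{-1}. Write E = UᵀDU with U orthogonal and D = diag(λ₁,…,λ_K), with u_{ik} the k-th component of the i-th row of U. Then for every i: E'_{ii} = −Σ_{k=1}^K (λ_k²/(1+λ_k))·u_{ik}² ≤ 0; moreover, if E_{ki} > 0 for some k ≠ i, then E'_{ii} < 0. -/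
open Matrix Finset

/-- Let `E = Uᵀ D U` be real symmetric with zero diagonal and eigenvalues
`λ_k` with `|λ_k| < 1` (`U` orthogonal, `D = diag(λ₁,…,λ_K)`), and `E' := I − (I+E)⁻¹`.
Writing `u_{ik} = U k i` for the `k`-th component of the `i`-th column of `U`, for every `i`:
`E'_{ii} = −Σ_k (λ_k²/(1+λ_k))·u_{ik}² ≤ 0`; moreover if `E k i > 0` for some `k ≠ i` then
`E'_{ii} < 0`. -/
theorem stmt_11 (K : ℕ) (E U : Matrix (Fin K) (Fin K) ℝ) (lam : Fin K → ℝ)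
    (hEsymm : E.IsSymm) (hdiag : ∀ i, E i i = 0)
    (hUorth : Uᵀ * U = 1 ∧ U * Uᵀ = 1)
    (hdecomp : E = Uᵀ * Matrix.diagonal lam * U)
    (hbound : ∀ k, |lam k| < 1) :
    ∀ i : Fin K,
      ((1 : Matrix (Fin K) (Fin K) ℝ) - (1 + E)⁻¹) i i =
          -(∑ k : Fin K, lam k ^ 2 / (1 + lam k) * (U k i) ^ 2) ∧
      ((1 : Matrix (Fin K) (Fin K) ℝ) - (1 + E)⁻¹) i i ≤ 0 ∧
      ((∃ k : Fin K, k ≠ i ∧ 0 < E k i) →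
        ((1 : Matrix (Fin K) (Fin K) ℝ) - (1 + E)⁻¹) i i < 0) := by
  obtain ⟨hUtU, hUUt⟩ := hUorth
  have hpos : ∀ k, 0 < 1 + lam k := fun k => by
    have := abs_lt.mp (hbound k); linarith [this.1]
  have hne : ∀ k, 1 + lam k ≠ 0 := fun k => (hpos k).ne'
  -- explicit inverse
  have h1E : 1 + E = Uᵀ * Matrix.diagonal (fun k => 1 + lam k) * U := by
    have h1 : (1 : Matrix (Fin K) (Fin K) ℝ) = Uᵀ * (1 : Matrix (Fin K) (Fin K) ℝ) * U := by
      rw [Matrix.mul_one, hUtU]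
    calc 1 + E = Uᵀ * 1 * U + Uᵀ * Matrix.diagonal lam * U := by rw [← h1, ← hdecomp]
      _ = Uᵀ * (1 + Matrix.diagonal lam) * U := by noncomm_ring
      _ = Uᵀ * Matrix.diagonal (fun k => 1 + lam k) * U := by
          rw [← Matrix.diagonal_one, Matrix.diagonal_add]
  have hinv : (1 + E)⁻¹ = Uᵀ * Matrix.diagonal (fun k => (1 + lam k)⁻¹) * U := by
    apply Matrix.inv_eq_right_inv
    rw [h1E]
    calc Uᵀ * Matrix.diagonal (fun k => 1 + lam k) * U *
          (Uᵀ * Matrix.diagonal (fun k => (1 + lam k)⁻¹) * U)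
        = Uᵀ * Matrix.diagonal (fun k => 1 + lam k) * (U * Uᵀ) *
            Matrix.diagonal (fun k => (1 + lam k)⁻¹) * U := by
          simp only [Matrix.mul_assoc]
      _ = Uᵀ * (Matrix.diagonal (fun k => 1 + lam k) *
            Matrix.diagonal (fun k => (1 + lam k)⁻¹)) * U := by
          rw [hUUt, Matrix.mul_one]; simp only [Matrix.mul_assoc]
      _ = 1 := by
          rw [Matrix.diagonal_mul_diagonal]
          have : (fun k => (1 + lam k) * (1 + lam k)⁻¹) = fun _ => (1 : ℝ) := by
            funext k; exact mul_inv_cancel₀ (hne k)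
          rw [this, Matrix.diagonal_one, Matrix.mul_one, hUtU]
  -- diagonal entry formula
  have hentry : ∀ (d : Fin K → ℝ) (i : Fin K),
      (Uᵀ * Matrix.diagonal d * U) i i = ∑ k, d k * (U k i) ^ 2 := by
    intro d i
    rw [Matrix.mul_assoc, Matrix.mul_apply]
    refine Finset.sum_congr rfl fun k _ => ?_
    rw [Matrix.diagonal_mul, Matrix.transpose_apply]
    ring
  intro i
  have hnorm : ∑ k, (U k i) ^ 2 = 1 := by
    have := congrFun (congrFun hUtU i) i
    simp only [Matrix.mul_apply, Matrix.transpose_apply, Matrix.one_apply_eq] at this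
    rw [← this]
    exact Finset.sum_congr rfl fun k _ => by ring
  have hEii : ∑ k, lam k * (U k i) ^ 2 = 0 := by
    rw [← hentry lam i, ← hdecomp, hdiag]
  have key : ((1 : Matrix (Fin K) (Fin K) ℝ) - (1 + E)⁻¹) i i =
      -(∑ k : Fin K, lam k ^ 2 / (1 + lam k) * (U k i) ^ 2) := by
    rw [Matrix.sub_apply, hinv, hentry, Matrix.one_apply_eq]
    have hterm_eq : ∀ k : Fin K, (1 + lam k)⁻¹ * U k i ^ 2 =
        U k i ^ 2 - lam k * U k i ^ 2 + lam k ^ 2 / (1 + lam k) * U k i ^ 2 := by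
      intro k
      field_simp [hne k]
      ring
    rw [Finset.sum_congr rfl fun k _ => hterm_eq k, Finset.sum_add_distrib,
      Finset.sum_sub_distrib, hnorm, hEii]
    ring
  have hterm : ∀ k, 0 ≤ lam k ^ 2 / (1 + lam k) * (U k i) ^ 2 := fun k =>
    mul_nonneg (div_nonneg (sq_nonneg _) (hpos k).le) (sq_nonneg _)
  refine ⟨key, by rw [key]; simpa using Finset.sum_nonneg fun k _ => hterm k, fun ⟨k, hki, hEk⟩ => ?_⟩
  rw [key, neg_lt_zero]
  rcases (Finset.sum_nonneg fun k _ => hterm k).lt_or_eq with h | h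
  · exact h
  · exfalso
    have hz : ∀ j : Fin K, lam j * U j i = 0 := by
      intro j
      have hj : lam j ^ 2 / (1 + lam j) * (U j i) ^ 2 = 0 := by
        have := (Finset.sum_eq_zero_iff_of_nonneg (fun k _ => hterm k)).mp h.symm j
          (Finset.mem_univ j)
        exact this
      have : lam j ^ 2 * (U j i) ^ 2 = 0 := by
        rcases mul_eq_zero.mp hj with h1 | h1
        · rw [div_eq_zero_iff] at h1
          rcases h1 with h1 | h1
          · rw [h1]; ring
          · exact absurd h1 (hne j)
        · rw [h1]; ring
      have : (lam j * U j i) ^ 2 = 0 := by rw [mul_pow]; exact this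
      exact pow_eq_zero_iff (two_ne_zero) |>.mp this
    have : E k i = 0 := by
      rw [hdecomp, Matrix.mul_assoc, Matrix.mul_apply]
      apply Finset.sum_eq_zero
      intro j _
      rw [Matrix.diagonal_mul, Matrix.transpose_apply]
      rw [show lam j * U j i = 0 from hz j, mul_zero]
    linarith
end

section
/- Let E ∈ ℝ^{K×K} be real symmetric with spectral radius λ₁ := max_i |λ_i(E)| < 1, and let E' := I − (I+E)^{-1}. Then for all indices n, n' ∈ {1,…,K}, |E'_{nn'} − E_{nn'}| ≤ λ₁²/(1 − λ₁). -/
open Matrix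

/-- Let `E ∈ ℝ^{K×K}` be real symmetric with spectral radius
`λ₁ = max_i |λ_i(E)| < 1` (expressed via an orthogonal diagonalization `E = Uᵀ D U` with all
eigenvalues bounded by `λ₁` in absolute value), and let `E' := I − (I+E)⁻¹`.  Then for all
`n, n'`, `|E'_{nn'} − E_{nn'}| ≤ λ₁²/(1 − λ₁)`. -/
theorem stmt_12 (K : ℕ) (E U : Matrix (Fin K) (Fin K) ℝ) (lam : Fin K → ℝ) (lam1 : ℝ)
    (hEsymm : E.IsSymm)
    (hUorth : Uᵀ * U = 1 ∧ U * Uᵀ = 1)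
    (hdecomp : E = Uᵀ * Matrix.diagonal lam * U)
    (hbound : ∀ i, |lam i| ≤ lam1) (hlam : lam1 < 1) :
    ∀ n n' : Fin K,
      |((1 : Matrix (Fin K) (Fin K) ℝ) - (1 + E)⁻¹) n n' - E n n'| ≤
        lam1 ^ 2 / (1 - lam1) := by
  intro n n'
  obtain ⟨hUtU, hUUt⟩ := hUorth
  have hlam1nonneg : 0 ≤ lam1 := le_trans (abs_nonneg _) (hbound n)
  have hpos : ∀ i, 0 < 1 + lam i := by
    intro i
    have := (abs_le.mp (hbound i)).1
    linarith
  -- inverse of (1 + E)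
  have hinv : (1 + E)⁻¹ = Uᵀ * Matrix.diagonal (fun i => (1 + lam i)⁻¹) * U := by
    apply Matrix.inv_eq_right_inv
    have h1E : 1 + E = Uᵀ * Matrix.diagonal (fun i => 1 + lam i) * U := by
      have : Matrix.diagonal (fun i => 1 + lam i) =
          (1 : Matrix (Fin K) (Fin K) ℝ) + Matrix.diagonal lam := by
        rw [← Matrix.diagonal_one, ← Matrix.diagonal_add]
      rw [this, Matrix.mul_add, Matrix.add_mul, ← hdecomp, Matrix.mul_one, hUtU]
    rw [h1E]
    simp only [Matrix.mul_assoc]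
    rw [← Matrix.mul_assoc U Uᵀ, hUUt, Matrix.one_mul,
      ← Matrix.mul_assoc (Matrix.diagonal _) (Matrix.diagonal _),
      Matrix.diagonal_mul_diagonal]
    have : (fun i => (1 + lam i) * (1 + lam i)⁻¹) = fun _ => (1 : ℝ) := by
      funext i
      exact mul_inv_cancel₀ (hpos i).ne'
    rw [this, Matrix.diagonal_one, Matrix.one_mul, hUtU]
  -- the difference matrix
  set g : Fin K → ℝ := fun i => 1 - (1 + lam i)⁻¹ - lam i with hg
  have hM : (1 : Matrix (Fin K) (Fin K) ℝ) - (1 + E)⁻¹ - E = Uᵀ * Matrix.diagonal g * U := by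
    have h1 : (1 : Matrix (Fin K) (Fin K) ℝ) = Uᵀ * Matrix.diagonal (fun _ => (1:ℝ)) * U := by
      rw [Matrix.diagonal_one, Matrix.mul_one, hUtU]
    rw [hinv]
    conv_lhs => rw [h1, hdecomp]
    rw [← Matrix.sub_mul, ← Matrix.sub_mul, ← Matrix.mul_sub, ← Matrix.mul_sub,
      Matrix.diagonal_sub, Matrix.diagonal_sub]
  have hentry : ((1 : Matrix (Fin K) (Fin K) ℝ) - (1 + E)⁻¹) n n' - E n n' =
      ∑ i, U i n * g i * U i n' := by
    have h := congrFun (congrFun hM n) n'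
    rw [show ((1 : Matrix (Fin K) (Fin K) ℝ) - (1 + E)⁻¹) n n' - E n n' =
        ((1 : Matrix (Fin K) (Fin K) ℝ) - (1 + E)⁻¹ - E) n n' from rfl, h,
      Matrix.mul_assoc, Matrix.mul_apply]
    apply Finset.sum_congr rfl
    intro i _
    rw [Matrix.diagonal_mul, Matrix.transpose_apply]
    ring
  rw [hentry]
  -- bound on g
  set C : ℝ := lam1 ^ 2 / (1 - lam1) with hC
  have hCnonneg : 0 ≤ C := div_nonneg (sq_nonneg _) (by linarith)
  have hgbound : ∀ i, |g i| ≤ C := by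
    intro i
    have h1 : g i = -(lam i ^ 2) / (1 + lam i) := by
      have hne : (1 + lam i) ≠ 0 := (hpos i).ne'
      rw [hg]
      field_simp
      ring
    rw [h1, abs_div, abs_neg, abs_of_pos (hpos i), abs_pow, sq_abs]
    have hla := hbound i
    have h1l : 1 - lam1 ≤ 1 + lam i := by
      have := (abs_le.mp hla).1; linarith
    apply div_le_div₀ (sq_nonneg lam1) _ (by linarith) h1l
    have : |lam i| ^ 2 ≤ lam1 ^ 2 := pow_le_pow_left₀ (abs_nonneg _) hla 2
    simpa [sq_abs] using this
  -- Cauchy-Schwarz bound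
  have hcol : ∀ m : Fin K, ∑ i, U i m ^ 2 = 1 := by
    intro m
    have := congrFun (congrFun hUtU m) m
    rw [Matrix.mul_apply, Matrix.one_apply_eq] at this
    rw [← this]
    apply Finset.sum_congr rfl
    intro i _
    rw [Matrix.transpose_apply, sq]
  have hCS : ∑ i, |U i n| * |U i n'| ≤ 1 := by
    have h2 := Finset.sum_mul_sq_le_sq_mul_sq Finset.univ
      (fun i => |U i n|) (fun i => |U i n'|)
    have hs1 : ∑ i, |U i n| ^ 2 = 1 := by
      simpa [sq_abs] using hcol n
    have hs2 : ∑ i, |U i n'| ^ 2 = 1 := by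
      simpa [sq_abs] using hcol n'
    rw [hs1, hs2, one_mul] at h2
    have hnn : 0 ≤ ∑ i, |U i n| * |U i n'| :=
      Finset.sum_nonneg fun i _ => mul_nonneg (abs_nonneg _) (abs_nonneg _)
    nlinarith [h2, hnn]
  calc |∑ i, U i n * g i * U i n'| ≤ ∑ i, |U i n * g i * U i n'| :=
        Finset.abs_sum_le_sum_abs _ _
    _ ≤ ∑ i, C * (|U i n| * |U i n'|) := by
        apply Finset.sum_le_sum
        intro i _
        rw [abs_mul, abs_mul]
        calc |U i n| * |g i| * |U i n'| ≤ |U i n| * C * |U i n'| := by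
              apply mul_le_mul_of_nonneg_right _ (abs_nonneg _)
              exact mul_le_mul_of_nonneg_left (hgbound i) (abs_nonneg _)
          _ = C * (|U i n| * |U i n'|) := by ring
    _ = C * ∑ i, |U i n| * |U i n'| := by rw [← Finset.mul_sum]
    _ ≤ C * 1 := mul_le_mul_of_nonneg_left hCS hCnonneg
    _ = C := mul_one C
end

section
/- Let E ∈ ℝ^{K×K} be real symmetric with zero diagonal (E_{nn} = 0 for all n) such that I + E is invertible, and let E' := I − (I+E)^{-1}. Then for every n ∈ {1,…,K}: Σ_{k≠n} E_{nk}·E'_{nk} = −E'_{nn}. -/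
open Matrix Finset

/-- Let `E ∈ ℝ^{K×K}` be real symmetric with zero diagonal such that `I + E`
is invertible, and let `E' := I − (I+E)⁻¹`.  Then for every `n`,
`Σ_{k≠n} E_{nk}·E'_{nk} = −E'_{nn}`. -/
theorem stmt_13 (K : ℕ) (E : Matrix (Fin K) (Fin K) ℝ)
    (hEsymm : E.IsSymm) (hdiag : ∀ n, E n n = 0)
    (hinv : IsUnit (1 + E)) :
    ∀ n : Fin K,
      ∑ k ∈ Finset.univ.erase n,
          E n k * ((1 : Matrix (Fin K) (Fin K) ℝ) - (1 + E)⁻¹) n k =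
        -(((1 : Matrix (Fin K) (Fin K) ℝ) - (1 + E)⁻¹) n n) := by
  intro n
  set E' : Matrix (Fin K) (Fin K) ℝ := (1 : Matrix (Fin K) (Fin K) ℝ) - (1 + E)⁻¹ with hE'
  have hunit : IsUnit (1 + E).det := (Matrix.isUnit_iff_isUnit_det _).mp hinv
  have hmul : (1 + E) * (1 + E)⁻¹ = 1 := mul_nonsing_inv _ hunit
  -- symmetry of E'
  have hsymmE' : E'.IsSymm := by
    have h1 : ((1 : Matrix (Fin K) (Fin K) ℝ) + E).IsSymm := by
      unfold Matrix.IsSymm at *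
      rw [Matrix.transpose_add, Matrix.transpose_one, hEsymm]
    have h2 : ((1 + E)⁻¹).IsSymm := by
      unfold Matrix.IsSymm at *
      rw [Matrix.transpose_nonsing_inv, h1]
    unfold Matrix.IsSymm at *
    rw [hE', Matrix.transpose_sub, Matrix.transpose_one, h2]
  -- key identity: E * E' = E - E'
  have hkey : E * E' = E - E' := by
    have h : (1 + E) * E' = E := by
      rw [hE', Matrix.mul_sub, mul_one, hmul]
      abel
    rw [add_mul, one_mul] at h
    exact eq_sub_of_add_eq' h
  have hnn := congrFun (congrFun hkey n) n
  rw [Matrix.mul_apply, Matrix.sub_apply, hdiag n, zero_sub] at hnn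
  have hsum : ∑ k ∈ Finset.univ.erase n, E n k * E' n k
      = ∑ k : Fin K, E n k * E' k n := by
    rw [Finset.sum_erase _ (f := fun k => E n k * E' n k) (by simp [hdiag n])]
    refine Finset.sum_congr rfl fun k _ => ?_
    conv_lhs => rw [← hsymmE']
    rfl
  rw [hsum, hnn]
end

section
/- Let K ≥ 2 and M > 36K² be integers, and let E ∈ ℝ^{K×K} be real symmetric with zero diagonal whose eigenvalues λ_i satisfy max_i |λ_i| < 1/K and min_i |λ_i| ≥ 6/√M. Let E' := I − (I+E)^{-1}. Then for every n ∈ {1,…,K} and all reals δ₁, δ₃ with |δ₁| ≤ 1/2 and |δ₃| ≤ 3/M: Σ_{n'≠n} ((1+δ₁)·E'_{nn'} + δ₃)·E_{nn'} > 0. -/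
open Matrix Finset

private lemma contract_aux {K : ℕ} (U : Matrix (Fin K) (Fin K) ℝ)
    (h : ∀ i j, (∑ m, U i m * U j m) = if i = j then (1:ℝ) else 0)
    (c e : Fin K → ℝ) :
    ∑ m, (∑ i, c i * U i m) * (∑ j, e j * U j m) = ∑ i, c i * e i := by
  have step : ∀ m, (∑ i, c i * U i m) * (∑ j, e j * U j m)
      = ∑ i, ∑ j, (c i * e j) * (U i m * U j m) := by
    intro m
    rw [Finset.sum_mul_sum]
    exact Finset.sum_congr rfl fun i _ => Finset.sum_congr rfl fun j _ => by ring
  simp_rw [step]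
  rw [Finset.sum_comm]
  have step2 : ∀ i : Fin K, ∑ m, ∑ j, (c i * e j) * (U i m * U j m)
      = ∑ j, (c i * e j) * ∑ m, U i m * U j m := by
    intro i
    rw [Finset.sum_comm]
    exact Finset.sum_congr rfl fun j _ => (Finset.mul_sum _ _ _).symm
  simp_rw [step2, h, mul_ite, mul_one, mul_zero, Finset.sum_ite_eq, Finset.mem_univ,
    if_true]

/-- Let `K ≥ 2`, `M > 36K²` be integers, and let `E ∈ ℝ^{K×K}` be real
symmetric with zero diagonal whose eigenvalues `λ_i` (via an orthogonal diagonalization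
`E = Uᵀ D U`) satisfy `max_i |λ_i| < 1/K` and `min_i |λ_i| ≥ 6/√M`.  Let `E' := I − (I+E)⁻¹`.
Then for every `n` and all reals `δ₁, δ₃` with `|δ₁| ≤ 1/2` and `|δ₃| ≤ 3/M`:
`Σ_{n'≠n} ((1+δ₁)·E'_{nn'} + δ₃)·E_{nn'} > 0`. -/
theorem stmt_14 (K M : ℕ) (hK : 2 ≤ K) (hM : 36 * K ^ 2 < M)
    (E U : Matrix (Fin K) (Fin K) ℝ) (lam : Fin K → ℝ)
    (hEsymm : E.IsSymm) (hdiag : ∀ i, E i i = 0)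
    (hUorth : Uᵀ * U = 1 ∧ U * Uᵀ = 1)
    (hdecomp : E = Uᵀ * Matrix.diagonal lam * U)
    (hmax : ∀ i, |lam i| < 1 / (K : ℝ))
    (hmin : ∀ i, 6 / Real.sqrt M ≤ |lam i|) :
    ∀ n : Fin K, ∀ δ₁ δ₃ : ℝ, |δ₁| ≤ 1 / 2 → |δ₃| ≤ 3 / (M : ℝ) →
      0 < ∑ n' ∈ Finset.univ.erase n,
        ((1 + δ₁) * ((1 : Matrix (Fin K) (Fin K) ℝ) - (1 + E)⁻¹) n n' + δ₃) * E n n' := by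
  intro n δ₁ δ₃ hδ₁ hδ₃
  have hK0 : (0:ℝ) < K := by positivity
  have hKR : (2:ℝ) ≤ K := by exact_mod_cast hK
  have hM0 : (0:ℝ) < M := by
    have : 0 < M := lt_of_le_of_lt (Nat.zero_le _) hM
    exact_mod_cast this
  -- basic eigenvalue bounds
  have hlam_half : ∀ i, |lam i| ≤ 1 / 2 := fun i =>
    le_of_lt (lt_of_lt_of_le (hmax i) (by
      rw [div_le_div_iff₀ hK0 (by norm_num)]; linarith))
  have hpos : ∀ i, (0:ℝ) < 1 + lam i := fun i => by
    have := abs_le.mp (hlam_half i); linarith [this.1]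
  have hne : ∀ i, (1:ℝ) + lam i ≠ 0 := fun i => ne_of_gt (hpos i)
  have hlt32 : ∀ i, (1:ℝ) + lam i ≤ 3 / 2 := fun i => by
    have := abs_le.mp (hlam_half i); linarith [this.2]
  have hlamsq : ∀ i, 36 / (M:ℝ) ≤ lam i ^ 2 := by
    intro i
    have hs : Real.sqrt M > 0 := Real.sqrt_pos.mpr hM0
    have h1 : (6 / Real.sqrt M) ^ 2 ≤ |lam i| ^ 2 := by
      have h0 : 0 ≤ 6 / Real.sqrt M := by positivity
      exact pow_le_pow_left₀ h0 (hmin i) 2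
    have h2 : (6 / Real.sqrt M) ^ 2 = 36 / (M:ℝ) := by
      rw [div_pow, Real.sq_sqrt hM0.le]; norm_num
    rw [← h2, ← sq_abs (lam i)]
    exact h1
  -- orthogonality in coordinates
  have horth1 : ∀ a b, (∑ i, U i a * U i b) = if a = b then (1:ℝ) else 0 := by
    intro a b
    have := congrFun (congrFun hUorth.1 a) b
    simpa [Matrix.mul_apply, Matrix.transpose_apply, Matrix.one_apply] using this
  have horth2 : ∀ i j, (∑ m, U i m * U j m) = if i = j then (1:ℝ) else 0 := by
    intro i j
    have := congrFun (congrFun hUorth.2 i) j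
    simpa [Matrix.mul_apply, Matrix.transpose_apply, Matrix.one_apply] using this
  -- entries of E
  have hE : ∀ a b, E a b = ∑ i, (lam i * U i a) * U i b := by
    intro a b
    rw [hdecomp]
    rw [Matrix.mul_apply]
    refine Finset.sum_congr rfl fun i _ => ?_
    rw [Matrix.mul_diagonal, Matrix.transpose_apply]
    ring
  -- the inverse of 1 + E
  set d : Fin K → ℝ := fun i => (1 + lam i)⁻¹ with hd
  have hinv : (1 + E)⁻¹ = Uᵀ * Matrix.diagonal d * U := by
    apply Matrix.inv_eq_right_inv
    have h1E : 1 + E = Uᵀ * Matrix.diagonal (fun i => 1 + lam i) * U := by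
      have : Matrix.diagonal (fun i : Fin K => (1:ℝ) + lam i)
          = 1 + Matrix.diagonal lam := by
        rw [← Matrix.diagonal_one, Matrix.diagonal_add]
      rw [hdecomp, this, Matrix.mul_add, Matrix.add_mul, Matrix.mul_one, hUorth.1]
    rw [h1E]
    calc Uᵀ * Matrix.diagonal (fun i => 1 + lam i) * U * (Uᵀ * Matrix.diagonal d * U)
        = Uᵀ * Matrix.diagonal (fun i => 1 + lam i) * (U * Uᵀ) * Matrix.diagonal d * U := by
          simp only [Matrix.mul_assoc]
      _ = Uᵀ * (Matrix.diagonal (fun i => 1 + lam i) * Matrix.diagonal d) * U := by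
          rw [hUorth.2]; simp only [Matrix.mul_one, Matrix.mul_assoc]
      _ = Uᵀ * U := by
          rw [Matrix.diagonal_mul_diagonal]
          have : (fun i => (1 + lam i) * d i) = fun _ => (1:ℝ) := by
            funext i; simp [hd, mul_inv_cancel₀ (hne i)]
          rw [this, Matrix.diagonal_one, Matrix.mul_one]
      _ = 1 := hUorth.1
  -- entries of E' = 1 - (1+E)⁻¹
  have hE' : ∀ b, ((1 : Matrix (Fin K) (Fin K) ℝ) - (1 + E)⁻¹) n b
      = ∑ i, (lam i * d i * U i n) * U i b := by
    intro b
    rw [Matrix.sub_apply, hinv]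
    have h1 : (1 : Matrix (Fin K) (Fin K) ℝ) n b = ∑ i, U i n * U i b := by
      rw [horth1 n b, Matrix.one_apply]
    have h2 : (Uᵀ * Matrix.diagonal d * U) n b = ∑ i, (d i * U i n) * U i b := by
      rw [Matrix.mul_apply]
      refine Finset.sum_congr rfl fun i _ => ?_
      rw [Matrix.mul_diagonal, Matrix.transpose_apply]; ring
    rw [h1, h2, ← Finset.sum_sub_distrib]
    refine Finset.sum_congr rfl fun i _ => ?_
    have hdi : 1 - d i = lam i * d i := by
      have h0 := hne i
      simp only [hd]
      field_simp; ring
    linear_combination (U i n * U i b) * hdi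
  -- extend sum over erase to full sum
  have hfn : ((1 + δ₁) * ((1 : Matrix (Fin K) (Fin K) ℝ) - (1 + E)⁻¹) n n + δ₃) * E n n = 0 := by
    rw [hdiag n, mul_zero]
  rw [Finset.sum_erase (f := fun n' => ((1 + δ₁) * ((1 : Matrix (Fin K) (Fin K) ℝ) - (1 + E)⁻¹) n n' + δ₃) * E n n') Finset.univ hfn]
  -- split into two sums
  have hsplit : ∑ n', ((1 + δ₁) * ((1 : Matrix (Fin K) (Fin K) ℝ) - (1 + E)⁻¹) n n' + δ₃) * E n n'
      = (1 + δ₁) * (∑ n', ((1 : Matrix (Fin K) (Fin K) ℝ) - (1 + E)⁻¹) n n' * E n n')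
        + δ₃ * (∑ n', E n n') := by
    rw [Finset.mul_sum, Finset.mul_sum, ← Finset.sum_add_distrib]
    exact Finset.sum_congr rfl fun m _ => by ring
  rw [hsplit]
  -- compute A = ∑ E'_{nm} E_{nm}
  set A := ∑ n', ((1 : Matrix (Fin K) (Fin K) ℝ) - (1 + E)⁻¹) n n' * E n n' with hA
  set B := ∑ n', E n n' with hB
  have hAval : A = ∑ i, (lam i ^ 2 * d i) * U i n ^ 2 := by
    rw [hA]
    have := contract_aux U horth2 (fun i => lam i * d i * U i n) (fun i => lam i * U i n)
    calc ∑ n', ((1 : Matrix (Fin K) (Fin K) ℝ) - (1 + E)⁻¹) n n' * E n n'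
        = ∑ m, (∑ i, (fun i => lam i * d i * U i n) i * U i m)
            * (∑ j, (fun i => lam i * U i n) j * U j m) := by
          refine Finset.sum_congr rfl fun m _ => ?_
          rw [hE' m, hE n m]
      _ = ∑ i, (lam i * d i * U i n) * (lam i * U i n) := this
      _ = ∑ i, (lam i ^ 2 * d i) * U i n ^ 2 :=
          Finset.sum_congr rfl fun i _ => by ring
  -- ∑ v² = 1
  have hv1 : ∑ i, U i n ^ 2 = 1 := by
    have h := horth1 n n
    rw [if_pos rfl] at h
    calc ∑ i, U i n ^ 2 = ∑ i, U i n * U i n := Finset.sum_congr rfl fun i _ => by ring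
      _ = 1 := h
  -- lower bound on A
  have hdlb : ∀ i, (2:ℝ)/3 ≤ d i := by
    intro i
    rw [hd]
    rw [le_inv_comm₀] <;> [skip; norm_num; exact hpos i]
    · calc (1:ℝ) + lam i ≤ 3/2 := hlt32 i
        _ = ((2:ℝ)/3)⁻¹ := by norm_num
  have hAlb : 24 / (M:ℝ) ≤ A := by
    rw [hAval]
    calc (24:ℝ) / M = ∑ i, (24 / (M:ℝ)) * U i n ^ 2 := by
          rw [← Finset.mul_sum, hv1, mul_one]
      _ ≤ ∑ i, (lam i ^ 2 * d i) * U i n ^ 2 := by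
          refine Finset.sum_le_sum fun i _ => ?_
          have h1 : 24 / (M:ℝ) ≤ lam i ^ 2 * d i := by
            have hmm := mul_le_mul (hlamsq i) (hdlb i) (by norm_num) (sq_nonneg _)
            calc 24/(M:ℝ) = 36/(M:ℝ) * (2/3) := by ring
              _ ≤ _ := hmm
          exact mul_le_mul_of_nonneg_right h1 (sq_nonneg _)
  -- bound on B
  have hsK : ∑ i, (∑ m, U i m) ^ 2 = K := by
    have : ∀ i, (∑ m, U i m) ^ 2 = ∑ m, ∑ m', U i m * U i m' := by
      intro i
      rw [sq, Finset.sum_mul_sum]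
    simp_rw [this]
    rw [Finset.sum_comm]
    have : ∀ m : Fin K, ∑ i, ∑ m', U i m * U i m' = ∑ m', ∑ i, U i m * U i m' :=
      fun m => Finset.sum_comm
    simp_rw [this, horth1, Finset.sum_ite_eq, Finset.mem_univ, if_true]
    simp
  have hBval : B = ∑ i, (lam i * U i n) * (∑ m, U i m) := by
    rw [hB]
    simp_rw [hE n]
    rw [Finset.sum_comm]
    exact Finset.sum_congr rfl fun i _ => (Finset.mul_sum _ _ _).symm
  have hBbd : |B| ≤ 1 := by
    rw [hBval]
    have h1 : |∑ i, (lam i * U i n) * (∑ m, U i m)| ≤ ∑ i, |lam i| * (|U i n| * |∑ m, U i m|) := by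
      refine le_trans (Finset.abs_sum_le_sum_abs _ _) ?_
      refine Finset.sum_le_sum fun i _ => ?_
      rw [abs_mul, abs_mul]
      ring_nf; exact le_refl _
    refine le_trans h1 ?_
    have h2 : ∑ i, |lam i| * (|U i n| * |∑ m, U i m|)
        ≤ (1/(K:ℝ)) * ∑ i, |U i n| * |∑ m, U i m| := by
      rw [Finset.mul_sum]
      refine Finset.sum_le_sum fun i _ => ?_
      exact mul_le_mul_of_nonneg_right (le_of_lt (hmax i)) (by positivity)
    refine le_trans h2 ?_
    have hCS : (∑ i, |U i n| * |∑ m, U i m|) ^ 2 ≤ (∑ i, |U i n| ^ 2) * ∑ i, |∑ m, U i m| ^ 2 :=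
      Finset.sum_mul_sq_le_sq_mul_sq _ _ _
    have he1 : ∑ i, |U i n| ^ 2 = 1 := by simp_rw [sq_abs]; exact hv1
    have he2 : ∑ i, |∑ m, U i m| ^ 2 = K := by simp_rw [sq_abs]; exact hsK
    rw [he1, he2, one_mul] at hCS
    have hnn : 0 ≤ ∑ i, |U i n| * |∑ m, U i m| := Finset.sum_nonneg fun i _ => by positivity
    have h3 : ∑ i, |U i n| * |∑ m, U i m| ≤ K := by
      nlinarith [hK0]
    calc (1/(K:ℝ)) * ∑ i, |U i n| * |∑ m, U i m| ≤ (1/(K:ℝ)) * K := by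
          exact mul_le_mul_of_nonneg_left h3 (by positivity)
      _ = 1 := by field_simp
  -- final estimate
  have hApos : 0 < A := lt_of_lt_of_le (by positivity) hAlb
  have h1δ : (1:ℝ)/2 ≤ 1 + δ₁ := by have := abs_le.mp hδ₁; linarith [this.1]
  have hterm1 : 12 / (M:ℝ) ≤ (1 + δ₁) * A := by
    calc 12 / (M:ℝ) = (1/2) * (24 / M) := by ring
      _ ≤ (1/2) * A := by linarith [hAlb]
      _ ≤ (1 + δ₁) * A := mul_le_mul_of_nonneg_right h1δ hApos.le
  have hterm2 : -(3 / (M:ℝ)) ≤ δ₃ * B := by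
    have h : |δ₃ * B| ≤ 3 / M := by
      rw [abs_mul]
      calc |δ₃| * |B| ≤ (3 / (M:ℝ)) * 1 := by
            exact mul_le_mul hδ₃ hBbd (abs_nonneg _) (by positivity)
        _ = 3 / M := by ring
    linarith [(abs_le.mp h).1]
  have : 9 / (M:ℝ) ≤ (1 + δ₁) * A + δ₃ * B := by
    have : 12 / (M:ℝ) - 3 / M = 9 / M := by ring
    linarith
  linarith [this, show (0:ℝ) < 9 / M by positivity]
end

section
/- Fix integers M, K ≥ 1, a subset Ψ ⊆ {1,…,K}, conditional probability distributions P(·|n) on {1,…,M} for each n ∈ {1,…,K}, constants η_Z > 0, γ > 0, and reals β_{nn'} for n ≠ n'. For z ∈ ℝ^M define the unit vectors f_n ∈ ℝ^M by f_{nl} := P(l|n)·e^{z_l} / √(Σ_{l'} P(l'|n)²·e^{2z_{l'}}), and for each token l define the self-attention rate Δ_l := η_Z·γ·Σ_{n∈Ψ} f_{nl}·Σ_{n'≠n} β_{nn'}·((f_nᵀf_{n'})·f_{nl} − f_{n'l}), and ξ_n := γ·Σ_{n'≠n} β_{nn'}·f_nᵀf_{n'}. If l is a distinct token of some n₀ ∈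 Ψ, i.e. P(l|n₀) > 0 and P(l|n') = 0 for every n' ≠ n₀, and if ξ_{n₀} > 0, then Δ_l = η_Z·f_{n₀l}²·ξ_{n₀} > 0. -/
open Finset

/-- Under the long-sequence self-attention dynamics, if `l` is a distinct
token of some `n₀ ∈ Ψ` (i.e. `P(l|n₀) > 0` and `P(l|n') = 0` for every `n' ≠ n₀`) and
`ξ_{n₀} > 0`, then the self-attention rate of token `l` satisfies
`Δ_l = η_Z·f_{n₀l}²·ξ_{n₀} > 0`. -/
theorem stmt_15 (M K : ℕ) (hM : 1 ≤ M) (hK : 1 ≤ K)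
    (Ψ : Finset (Fin K)) (P : Fin K → Fin M → ℝ)
    (hP0 : ∀ n l, 0 ≤ P n l) (hP1 : ∀ n, ∑ l, P n l = 1)
    (ηZ γ : ℝ) (hηZ : 0 < ηZ) (hγ : 0 < γ)
    (β : Fin K → Fin K → ℝ) (z : Fin M → ℝ)
    -- normalized attention features  f_{nl} = P(l|n)e^{z_l}/√(Σ_{l'} P(l'|n)² e^{2 z_{l'}})
    (f : Fin K → Fin M → ℝ)
    (hf : ∀ n l, f n l =
      P n l * Real.exp (z l) / Real.sqrt (∑ l', (P n l') ^ 2 * Real.exp (2 * z l')))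
    -- the self-attention rate of each token
    (Δ : Fin M → ℝ)
    (hΔ : ∀ l, Δ l = ηZ * γ * ∑ n ∈ Ψ, f n l *
      ∑ n' ∈ Finset.univ.erase n, β n n' * ((∑ i, f n i * f n' i) * f n l - f n' l))
    -- the speed coefficients
    (ξ : Fin K → ℝ)
    (hξ : ∀ n, ξ n = γ * ∑ n' ∈ Finset.univ.erase n, β n n' * ∑ i, f n i * f n' i)
    -- `l` is a distinct token of `n₀ ∈ Ψ`
    (l : Fin M) (n₀ : Fin K) (hn₀ : n₀ ∈ Ψ)
    (hdist : 0 < P n₀ l) (hdist' : ∀ n' : Fin K, n' ≠ n₀ → P n' l = 0)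
    (hξpos : 0 < ξ n₀) :
    Δ l = ηZ * (f n₀ l) ^ 2 * ξ n₀ ∧ 0 < Δ l := by

  -- f n' l = 0 for n' ≠ n₀
  have hfz : ∀ n' : Fin K, n' ≠ n₀ → f n' l = 0 := by
    intro n' hne
    rw [hf, hdist' n' hne]; simp
  -- the outer sum reduces to the n₀ term
  have hsum : (∑ n ∈ Ψ, f n l *
      ∑ n' ∈ Finset.univ.erase n, β n n' * ((∑ i, f n i * f n' i) * f n l - f n' l))
      = f n₀ l * ∑ n' ∈ Finset.univ.erase n₀, β n₀ n' * ((∑ i, f n₀ i * f n' i) * f n₀ l) := by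
    rw [Finset.sum_eq_single n₀]
    · congr 1
      apply Finset.sum_congr rfl
      intro n' hn'
      rw [hfz n' (Finset.ne_of_mem_erase hn')]
      ring
    · intro n _ hne
      rw [hfz n hne]; ring
    · intro h; exact absurd hn₀ h
  have hEq : Δ l = ηZ * (f n₀ l) ^ 2 * ξ n₀ := by
    rw [hΔ, hsum, hξ, Finset.mul_sum, Finset.mul_sum, Finset.mul_sum]
    rw [Finset.mul_sum]
    apply Finset.sum_congr rfl
    intro n' _
    ring
  refine ⟨hEq, ?_⟩
  have hfl : 0 < f n₀ l := by
    rw [hf]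
    apply div_pos (mul_pos hdist (Real.exp_pos _))
    apply Real.sqrt_pos.mpr
    apply Finset.sum_pos' (fun i _ => by positivity)
    exact ⟨l, Finset.mem_univ l, by positivity⟩
  rw [hEq]
  positivity
end

section
/- Fix integers M, K ≥ 1, a subset Ψ ⊆ {1,…,K}, conditional probability distributions P(·|n) on {1,…,M} for each n ∈ {1,…,K}, constants η_Z > 0, γ > 0, and reals β_{nn'} for n ≠ n'. For z ∈ ℝ^M define the unit vectors f_n ∈ ℝ^M by f_{nl} := P(l|n)·e^{z_l} / √(Σ_{l'} P(l'|n)²·e^{2z_{l'}}), and for each token l define Δ_l := η_Z·γ·Σ_{n∈Ψ} f_{nl}·Σ_{n'≠n} β_{nn'}·((f_nᵀf_{n'})·f_{nl} − f_{n'l}), and ξ_n := γ·Σ_{n'≠n} β_{nn'}·f_nᵀf_{n'}. Suppose l is the unique common token: for every pair n ≠ n', the set {l'' : P(l''|n)·P(l''|n') > 0} is contained in {l}. If ξ_n > 0 for all n, and at least one n ∈ Ψ with P(l|n) > 0 also has some token l' ≠ l with P(l'|n) > 0, then Δ_l = −η_Z·Σ_{n∈Ψ} (1 − f_{nl}²)·ξ_n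 < 0. -/
open Finset

/-- Under the long-sequence self-attention dynamics, if `l` is the unique
common token (every pairwise overlap of supports is contained in `{l}`), all speed coefficients
`ξ_n` are positive, and some `n ∈ Ψ` with `P(l|n) > 0` also has another token `l' ≠ l` with
`P(l'|n) > 0`, then the self-attention rate of `l` satisfies
`Δ_l = −η_Z·Σ_{n∈Ψ}(1 − f_{nl}²)·ξ_n < 0`. -/
theorem stmt_16 (M K : ℕ) (hM : 1 ≤ M) (hK : 1 ≤ K)
    (Ψ : Finset (Fin K)) (P : Fin K → Fin M → ℝ)
    (hP0 : ∀ n l, 0 ≤ P n l) (hP1 : ∀ n, ∑ l, P n l = 1)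
    (ηZ γ : ℝ) (hηZ : 0 < ηZ) (hγ : 0 < γ)
    (β : Fin K → Fin K → ℝ) (z : Fin M → ℝ)
    -- normalized attention features  f_{nl} = P(l|n)e^{z_l}/√(Σ_{l'} P(l'|n)² e^{2 z_{l'}})
    (f : Fin K → Fin M → ℝ)
    (hf : ∀ n l, f n l =
      P n l * Real.exp (z l) / Real.sqrt (∑ l', (P n l') ^ 2 * Real.exp (2 * z l')))
    -- the self-attention rate of each token
    (Δ : Fin M → ℝ)
    (hΔ : ∀ l, Δ l = ηZ * γ * ∑ n ∈ Ψ, f n l *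
      ∑ n' ∈ Finset.univ.erase n, β n n' * ((∑ i, f n i * f n' i) * f n l - f n' l))
    -- the speed coefficients
    (ξ : Fin K → ℝ)
    (hξ : ∀ n, ξ n = γ * ∑ n' ∈ Finset.univ.erase n, β n n' * ∑ i, f n i * f n' i)
    -- `l` is the unique common token
    (l : Fin M)
    (hcommon : ∀ n n' : Fin K, n ≠ n' → ∀ l'' : Fin M, 0 < P n l'' * P n' l'' → l'' = l)
    (hξpos : ∀ n, 0 < ξ n)
    (hsome : ∃ n ∈ Ψ, 0 < P n l ∧ ∃ l' : Fin M, l' ≠ l ∧ 0 < P n l') :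
    Δ l = -(ηZ * ∑ n ∈ Ψ, (1 - (f n l) ^ 2) * ξ n) ∧ Δ l < 0 := by
  -- positivity of the denominator
  have hD : ∀ n : Fin K, 0 < ∑ l', (P n l') ^ 2 * Real.exp (2 * z l') := by
    intro n
    obtain ⟨m, hm⟩ : ∃ m, 0 < P n m := by
      by_contra h
      push_neg at h
      have h0 : ∑ i, P n i = 0 :=
        Finset.sum_eq_zero (fun i _ => le_antisymm (h i) (hP0 n i))
      rw [hP1 n] at h0; norm_num at h0
    exact Finset.sum_pos' (fun i _ => mul_nonneg (sq_nonneg _) (Real.exp_pos _).le)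
      ⟨m, Finset.mem_univ m, mul_pos (pow_pos hm 2) (Real.exp_pos _)⟩
  have hf0 : ∀ n i, 0 ≤ f n i := by
    intro n i; rw [hf]
    exact div_nonneg (mul_nonneg (hP0 n i) (Real.exp_pos _).le) (Real.sqrt_nonneg _)
  -- each f n is a unit vector
  have hnorm : ∀ n, ∑ i, (f n i) ^ 2 = 1 := by
    intro n
    have hD' := hD n
    have hterm : ∀ i, (f n i) ^ 2 =
        (P n i) ^ 2 * Real.exp (2 * z i) / (∑ l', (P n l') ^ 2 * Real.exp (2 * z l')) := by
      intro i
      rw [hf, div_pow, mul_pow, Real.sq_sqrt hD'.le, ← Real.exp_nat_mul]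
      norm_num [mul_comm]
    rw [Finset.sum_congr rfl (fun i _ => hterm i), ← Finset.sum_div, div_self hD'.ne']
  have hfle : ∀ n, (f n l) ^ 2 ≤ 1 := by
    intro n
    rw [← hnorm n]
    exact Finset.single_le_sum (fun i _ => sq_nonneg (f n i)) (Finset.mem_univ l)
  -- overlap lemma
  have hip : ∀ n n', n ≠ n' → (∑ i, f n i * f n' i) = f n l * f n' l := by
    intro n n' h
    refine Finset.sum_eq_single_of_mem l (Finset.mem_univ l) (fun i _ hil => ?_)
    have hP : P n i * P n' i = 0 := by
      by_contra hne
      exact hil (hcommon n n' h i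
        (lt_of_le_of_ne (mul_nonneg (hP0 n i) (hP0 n' i)) (Ne.symm hne)))
    rcases mul_eq_zero.mp hP with h0 | h0
    · rw [hf n i, h0]; simp
    · rw [hf n' i, h0]; simp
  -- main identity
  have key : Δ l = -(ηZ * ∑ n ∈ Ψ, (1 - (f n l) ^ 2) * ξ n) := by
    rw [hΔ]
    have hterm : ∀ n ∈ Ψ, γ * (f n l *
        ∑ n' ∈ Finset.univ.erase n, β n n' * ((∑ i, f n i * f n' i) * f n l - f n' l))
        = -((1 - (f n l) ^ 2) * ξ n) := by
      intro n _
      rw [hξ]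
      have h1 : ∀ n' ∈ Finset.univ.erase n,
          β n n' * ((∑ i, f n i * f n' i) * f n l - f n' l)
          = β n n' * ((f n l * f n' l) * f n l - f n' l) := fun n' hn' => by
        rw [hip n n' (Finset.ne_of_mem_erase hn').symm]
      have h2 : ∀ n' ∈ Finset.univ.erase n,
          β n n' * ∑ i, f n i * f n' i = β n n' * (f n l * f n' l) := fun n' hn' => by
        rw [hip n n' (Finset.ne_of_mem_erase hn').symm]
      rw [Finset.sum_congr rfl h1, Finset.sum_congr rfl h2]
      simp only [Finset.mul_sum, ← Finset.sum_neg_distrib]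
      exact Finset.sum_congr rfl (fun n' _ => by ring)
    calc ηZ * γ * ∑ n ∈ Ψ, f n l *
          ∑ n' ∈ Finset.univ.erase n, β n n' * ((∑ i, f n i * f n' i) * f n l - f n' l)
        = ηZ * ∑ n ∈ Ψ, γ * (f n l *
          ∑ n' ∈ Finset.univ.erase n, β n n' * ((∑ i, f n i * f n' i) * f n l - f n' l)) := by
          rw [Finset.mul_sum, Finset.mul_sum]
          exact Finset.sum_congr rfl (fun n _ => by ring)
      _ = ηZ * ∑ n ∈ Ψ, -((1 - (f n l) ^ 2) * ξ n) := by
          rw [Finset.sum_congr rfl hterm]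
      _ = -(ηZ * ∑ n ∈ Ψ, (1 - (f n l) ^ 2) * ξ n) := by
          rw [Finset.sum_neg_distrib]; ring
  refine ⟨key, ?_⟩
  rw [key, neg_lt_zero]
  apply mul_pos hηZ
  obtain ⟨n₀, hn₀Ψ, hPl, l', hl'ne, hPl'⟩ := hsome
  have hfl' : 0 < f n₀ l' := by
    rw [hf]
    exact div_pos (mul_pos hPl' (Real.exp_pos _)) (Real.sqrt_pos.mpr (hD n₀))
  have hstrict : (f n₀ l) ^ 2 < 1 := by
    have h2 : (f n₀ l) ^ 2 + (f n₀ l') ^ 2 ≤ 1 := by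
      rw [← hnorm n₀]
      have : ({l, l'} : Finset (Fin M)) ⊆ Finset.univ := Finset.subset_univ _
      calc (f n₀ l) ^ 2 + (f n₀ l') ^ 2 = ∑ i ∈ ({l, l'} : Finset (Fin M)), (f n₀ i) ^ 2 := by
            rw [Finset.sum_pair (Ne.symm hl'ne)]
        _ ≤ ∑ i, (f n₀ i) ^ 2 :=
            Finset.sum_le_sum_of_subset_of_nonneg this (fun i _ _ => sq_nonneg _)
    nlinarith [sq_nonneg (f n₀ l')]
  refine Finset.sum_pos' (fun n _ => mul_nonneg (by nlinarith [hfle n]) (hξpos n).le)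
    ⟨n₀, hn₀Ψ, mul_pos (by nlinarith) (hξpos n₀)⟩
end

section
/- Fix a next token n and a distribution P(·|n) on {1,…,M}, and two tokens l ≠ l' with P(l|n) > 0 and P(l'|n) > 0. Let z_l, z_{l'} : [0,∞) → ℝ be differentiable and suppose there is a continuous function q : [0,∞) → ℝ such that ż_l(t) = P(l|n)²·e^{2z_l(t)}·q(t) and ż_{l'}(t) = P(l'|n)²·e^{2z_{l'}(t)}·q(t) for all t ≥ 0. Define the relative gain r(t) := P(l|n)²·e^{2z_l(t)} / (P(l'|n)²·e^{2z_{l'}(t)}) − 1. Then r(t) = r(0)·e^{2(z_l(t) − z_l(0))} for all t ≥ 0. -/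
open Real

/-! If `ż = c·e^{2z}·q`, then `e^{-2z}` has derivative `-2cq`. Hence `e^{-2z_l}` and
`(P(l|n)²/P(l'|n)²)·e^{-2z_{l'}}` both have derivative `-2P(l|n)²q`, so their difference,
which is exactly `r·e^{-2z_l}`, is constant in time. -/

theorem hasDerivAt_exp_neg_two_mul {z : ℝ → ℝ} {c q t : ℝ}
    (hz : HasDerivAt z (c * exp (2 * z t) * q) t) :
    HasDerivAt (fun s => exp (-(2 * z s))) (-2 * c * q) t := by
  have hexponent : HasDerivAt (fun s => -(2 * z s)) (-(2 * (c * exp (2 * z t) * q))) t :=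
    (hz.const_mul 2).neg
  convert hexponent.exp using 1
  rw [exp_neg]
  field_simp

theorem sub_eq_sub_of_hasDerivAt_eq {f g f' : ℝ → ℝ} {a : ℝ}
    (hf : ∀ t, a ≤ t → HasDerivAt f (f' t) t) (hg : ∀ t, a ≤ t → HasDerivAt g (f' t) t)
    {t : ℝ} (ht : a ≤ t) : f t - g t = f a - g a := by
  have hderiv : ∀ s, a ≤ s → HasDerivAt (f - g) 0 s := fun s hs => by
    simpa only [sub_self] using (hf s hs).sub (hg s hs)
  exact constant_of_has_deriv_right_zero
    (fun s hs => (hderiv s hs.1).continuousAt.continuousWithinAt)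
    (fun s hs => (hderiv s hs.1).hasDerivWithinAt) t ⟨ht, le_rfl⟩

theorem div_sub_one_mul_exp_neg {a b x y : ℝ} (hb : b ≠ 0) :
    (a * exp (2 * x) / (b * exp (2 * y)) - 1) * exp (-(2 * x)) =
      a / b * exp (-(2 * y)) - exp (-(2 * x)) := by
  rw [exp_neg, exp_neg]
  field_simp

theorem stmt_17_general (pl pl' : ℝ) (hpl' : 0 < pl')
    (zl zl' : ℝ → ℝ) (q : ℝ → ℝ)
    (hzl : ∀ t : ℝ, 0 ≤ t →
      HasDerivAt zl (pl ^ 2 * Real.exp (2 * zl t) * q t) t)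
    (hzl' : ∀ t : ℝ, 0 ≤ t →
      HasDerivAt zl' (pl' ^ 2 * Real.exp (2 * zl' t) * q t) t)
    (r : ℝ → ℝ)
    (hr : ∀ t, r t = pl ^ 2 * Real.exp (2 * zl t) / (pl' ^ 2 * Real.exp (2 * zl' t)) - 1) :
    ∀ t : ℝ, 0 ≤ t → r t = r 0 * Real.exp (2 * (zl t - zl 0)) := by
  intro t ht
  have hpl'2 : pl' ^ 2 ≠ 0 := by positivity
  have hgain : ∀ s, r s * exp (-(2 * zl s)) =
      pl ^ 2 / pl' ^ 2 * exp (-(2 * zl' s)) - exp (-(2 * zl s)) := fun s => by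
    rw [hr s, div_sub_one_mul_exp_neg hpl'2]
  have hconst : r t * exp (-(2 * zl t)) = r 0 * exp (-(2 * zl 0)) := by
    rw [hgain, hgain]
    refine sub_eq_sub_of_hasDerivAt_eq (f := fun s => pl ^ 2 / pl' ^ 2 * exp (-(2 * zl' s)))
      (fun s hs => ?_)
      (fun s hs => hasDerivAt_exp_neg_two_mul (hzl s hs)) ht
    exact ((hasDerivAt_exp_neg_two_mul (hzl' s hs)).const_mul (pl ^ 2 / pl' ^ 2)).congr_deriv
      (by field_simp)
  calc r t = r t * exp (-(2 * zl t)) * exp (2 * zl t) := by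
        rw [mul_assoc, ← exp_add, neg_add_cancel, exp_zero, mul_one]
    _ = r 0 * exp (2 * (zl t - zl 0)) := by
        rw [hconst, mul_assoc, ← exp_add]
        ring_nf

/-- Fix tokens `l ≠ l'` with conditional probabilities `P(l|n) = pl > 0`,
`P(l'|n) = pl' > 0`, and suppose the logits satisfy `ż_l(t) = pl²·e^{2z_l(t)}·q(t)` and
`ż_{l'}(t) = pl'²·e^{2z_{l'}(t)}·q(t)` for a common continuous `q`.  Then the relative gain
`r(t) := pl²e^{2z_l(t)}/(pl'²e^{2z_{l'}(t)}) − 1` satisfies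
`r(t) = r(0)·e^{2(z_l(t) − z_l(0))}` for all `t ≥ 0`. -/
theorem stmt_17 (pl pl' : ℝ) (hpl : 0 < pl) (hpl' : 0 < pl')
    (zl zl' : ℝ → ℝ) (q : ℝ → ℝ) (hq : Continuous q)
    (hzl : ∀ t : ℝ, 0 ≤ t →
      HasDerivAt zl (pl ^ 2 * Real.exp (2 * zl t) * q t) t)
    (hzl' : ∀ t : ℝ, 0 ≤ t →
      HasDerivAt zl' (pl' ^ 2 * Real.exp (2 * zl' t) * q t) t)
    (r : ℝ → ℝ)
    (hr : ∀ t, r t = pl ^ 2 * Real.exp (2 * zl t) / (pl' ^ 2 * Real.exp (2 * zl' t)) - 1) :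
    ∀ t : ℝ, 0 ≤ t → r t = r 0 * Real.exp (2 * (zl t - zl 0)) :=
  stmt_17_general pl pl' hpl' zl zl' q hzl hzl' r hr
end

section
/- Fix a next token n, a distribution P(·|n) on {1,…,M}, η_Z > 0, and a continuous function ξ : [0,∞) → (0,∞). Let z : [0,∞) → ℝ^M be differentiable, define f_{nl}(t) := P(l|n)·e^{z_l(t)} / √(Σ_{l'} P(l'|n)²·e^{2z_{l'}(t)}), and let D ⊆ {1,…,M} be a set of tokens ('distinct tokens') such that ż_l(t) = η_Z·f_{nl}(t)²·ξ(t) for every l ∈ D, while ż_l(t) < 0 for every l ∉ D with P(l|n) > 0 ('common tokens'). Suppose l₀ ∈ D satisfies P(l₀|n) > 0 and f_{nl₀}(0)² > f_{nl}(0)² for every l ∈ D with l ≠ l₀ (dominant token). Then z_{l₀}(t) and f_{nl₀}(t) are monotonically increasing in t, and with B(t) := η_Z·∫₀ᵗ ξ(t')dt' and growth factor χ(t) := e^{2(z_{l₀}(t) − z_{l₀}(0))}, one has e^{2·f_{nl₀}(0)²·B(t)} ≤ χ(t) ≤ e^{2·B(t)} for all t ≥ 0. -/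
open Real Finset Set

lemma myMonoAux (φ : ℝ → ℝ)
    (h : ∀ t : ℝ, 0 ≤ t → ∃ d : ℝ, 0 ≤ d ∧ HasDerivAt φ d t) :
    MonotoneOn φ (Set.Ici (0 : ℝ)) := by
  apply monotoneOn_of_deriv_nonneg (convex_Ici 0)
  · intro t ht
    obtain ⟨d, _, hd⟩ := h t ht
    exact hd.continuousAt.continuousWithinAt
  · intro t ht
    rw [interior_Ici] at ht
    obtain ⟨d, _, hd⟩ := h t (le_of_lt ht)
    exact hd.differentiableAt.differentiableWithinAt
  · intro t ht
    rw [interior_Ici] at ht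
    obtain ⟨d, hd0, hd⟩ := h t (le_of_lt ht)
    rw [hd.deriv]; exact hd0

lemma myAntiAux (φ : ℝ → ℝ)
    (h : ∀ t : ℝ, 0 ≤ t → ∃ d : ℝ, d ≤ 0 ∧ HasDerivAt φ d t) :
    AntitoneOn φ (Set.Ici (0 : ℝ)) := by
  apply antitoneOn_of_deriv_nonpos (convex_Ici 0)
  · intro t ht
    obtain ⟨d, _, hd⟩ := h t ht
    exact hd.continuousAt.continuousWithinAt
  · intro t ht
    rw [interior_Ici] at ht
    obtain ⟨d, _, hd⟩ := h t (le_of_lt ht)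
    exact hd.differentiableAt.differentiableWithinAt
  · intro t ht
    rw [interior_Ici] at ht
    obtain ⟨d, hd0, hd⟩ := h t (le_of_lt ht)
    rw [hd.deriv]; exact hd0

lemma myPosAux (g K : ℝ → ℝ) (hK : ContinuousOn K (Set.Ici (0:ℝ)))
    (hg : ∀ t : ℝ, 0 ≤ t → HasDerivAt g (K t * g t) t)
    (h0 : 0 < g 0) : ∀ t : ℝ, 0 ≤ t → 0 < g t := by
  intro t ht
  by_contra hle
  push_neg at hle
  have hgc : ContinuousOn g (Icc 0 t) :=
    fun s hs => ((hg s hs.1).continuousAt).continuousWithinAt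
  obtain ⟨t', ht', hgt'⟩ : ∃ t' ∈ Icc (0:ℝ) t, g t' = 0 := by
    have h00 : (0:ℝ) ∈ Icc (g t) (g 0) := ⟨hle, h0.le⟩
    obtain ⟨t', ht', h⟩ := intermediate_value_Icc' ht hgc h00
    exact ⟨t', ht', h⟩
  have ht'0 : (0:ℝ) ≤ t' := ht'.1
  obtain ⟨C, hC⟩ : ∃ C, ∀ s ∈ Icc (0:ℝ) t', ‖K s‖ ≤ C :=
    (isCompact_Icc).exists_bound_of_continuousOn (hK.mono (fun s hs => hs.1))
  set G : ℝ → ℝ := fun s => g (t' - s) with hGdef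
  have hGder : ∀ s ∈ Icc (0:ℝ) t', HasDerivAt G (-(K (t' - s) * g (t' - s))) s := by
    intro s hs
    have hu : (0:ℝ) ≤ t' - s := by linarith [hs.2]
    have h1 : HasDerivAt (fun s : ℝ => t' - s) (-1) s := by
      simpa using (hasDerivAt_id s).const_sub t'
    have := (hg (t' - s) hu).comp s h1
    rw [show -(K (t' - s) * g (t' - s)) = K (t' - s) * g (t' - s) * -1 by ring]
    exact this
  have hGcont : ContinuousOn G (Icc 0 t') :=
    fun s hs => ((hGder s hs).continuousAt).continuousWithinAt
  have key := norm_le_gronwallBound_of_norm_deriv_right_le (δ := 0) (K := C) (ε := 0)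
    (a := 0) (b := t') hGcont
    (fun s hs => (hGder s (Ico_subset_Icc_self hs)).hasDerivWithinAt)
    (by simp [hGdef, hgt'])
    ?_ t' ⟨ht'0, le_refl t'⟩
  · rw [gronwallBound_ε0_δ0] at key
    have : g 0 = 0 := by
      have := norm_le_zero_iff.mp key
      simpa [hGdef] using this
    linarith
  · intro s hs
    have hu : t' - s ∈ Icc (0:ℝ) t' := ⟨by linarith [hs.2.le], by linarith [hs.1]⟩
    have h1 := hC (t' - s) hu
    have he : ‖-(K (t' - s) * g (t' - s))‖ = ‖K (t' - s)‖ * ‖g (t' - s)‖ := by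
      rw [norm_neg, norm_mul]
    rw [he]
    have hnn : (0:ℝ) ≤ ‖g (t' - s)‖ := norm_nonneg _
    have : ‖K (t' - s)‖ * ‖g (t' - s)‖ ≤ C * ‖g (t' - s)‖ :=
      mul_le_mul_of_nonneg_right h1 hnn
    simpa [hGdef] using this

/-- Under the self-attention dynamics in which every distinct token `l ∈ D`
satisfies `ż_l(t) = η_Z f_{nl}(t)² ξ(t)` and every common token (with positive conditional
probability) has strictly negative rate, if `l₀ ∈ D` is dominant at initialization
(`f_{nl₀}(0)² > f_{nl}(0)²` for every other `l ∈ D`), then `z_{l₀}` and `f_{nl₀}` are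
monotonically increasing on `[0,∞)` and the growth factor `χ(t) = e^{2(z_{l₀}(t) − z_{l₀}(0))}`
satisfies `e^{2 f_{nl₀}(0)² B(t)} ≤ χ(t) ≤ e^{2 B(t)}`, with `B(t) = η_Z ∫₀ᵗ ξ`. -/
theorem stmt_18 (M : ℕ) (hM : 1 ≤ M)
    (P : Fin M → ℝ) (hP0 : ∀ l, 0 ≤ P l) (hP1 : ∑ l, P l = 1)
    (ηZ : ℝ) (hηZ : 0 < ηZ)
    (ξ : ℝ → ℝ) (hξcont : Continuous ξ) (hξpos : ∀ t : ℝ, 0 ≤ t → 0 < ξ t)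
    (z : ℝ → Fin M → ℝ)
    -- normalized attention components
    (f : ℝ → Fin M → ℝ)
    (hf : ∀ t l, f t l =
      P l * Real.exp (z t l) / Real.sqrt (∑ l', (P l') ^ 2 * Real.exp (2 * z t l')))
    -- distinct tokens and their dynamics
    (D : Finset (Fin M))
    (hD : ∀ l ∈ D, ∀ t : ℝ, 0 ≤ t →
      HasDerivAt (fun s => z s l) (ηZ * (f t l) ^ 2 * ξ t) t)
    -- common tokens have strictly negative rate
    (hC : ∀ l ∉ D, 0 < P l → ∀ t : ℝ, 0 ≤ t →
      ∃ d : ℝ, d < 0 ∧ HasDerivAt (fun s => z s l) d t)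
    -- dominant token `l₀`
    (l₀ : Fin M) (hl₀ : l₀ ∈ D) (hPl₀ : 0 < P l₀)
    (hdom : ∀ l ∈ D, l ≠ l₀ → (f 0 l) ^ 2 < (f 0 l₀) ^ 2)
    -- accumulated speed and growth factor
    (B χ : ℝ → ℝ)
    (hB : ∀ t, B t = ηZ * ∫ t' in (0 : ℝ)..t, ξ t')
    (hχ : ∀ t, χ t = Real.exp (2 * (z t l₀ - z 0 l₀))) :
    MonotoneOn (fun t => z t l₀) (Set.Ici (0 : ℝ)) ∧
    MonotoneOn (fun t => f t l₀) (Set.Ici (0 : ℝ)) ∧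
    ∀ t : ℝ, 0 ≤ t →
      Real.exp (2 * (f 0 l₀) ^ 2 * B t) ≤ χ t ∧ χ t ≤ Real.exp (2 * B t) := by
  -- the normalizer
  set S : ℝ → ℝ := fun t => ∑ l', (P l') ^ 2 * Real.exp (2 * z t l') with hSdef
  have hterm_nn : ∀ t (l : Fin M), 0 ≤ (P l) ^ 2 * Real.exp (2 * z t l) :=
    fun t l => mul_nonneg (sq_nonneg _) (Real.exp_pos _).le
  have hSpos : ∀ t, 0 < S t := by
    intro t
    apply Finset.sum_pos' (fun l _ => hterm_nn t l)
    exact ⟨l₀, Finset.mem_univ _, mul_pos (pow_pos hPl₀ 2) (Real.exp_pos _)⟩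
  have hexp2 : ∀ (x : ℝ), Real.exp (2 * x) = Real.exp x ^ 2 := by
    intro x; rw [sq, ← Real.exp_add]; ring_nf
  have hterm_le : ∀ t (l : Fin M), (P l) ^ 2 * Real.exp (2 * z t l) ≤ S t :=
    fun t l => Finset.single_le_sum (fun l' _ => hterm_nn t l') (Finset.mem_univ l)
  have hfsq : ∀ t l, f t l ^ 2 = (P l) ^ 2 * Real.exp (2 * z t l) / S t := by
    intro t l
    rw [hf, div_pow, mul_pow, Real.sq_sqrt (hSpos t).le, hexp2]
  have hfsq_le : ∀ t l, f t l ^ 2 ≤ 1 := by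
    intro t l
    rw [hfsq]
    exact div_le_one_of_le₀ (hterm_le t l) (hSpos t).le
  have hfnn : ∀ t l, 0 ≤ f t l := by
    intro t l
    rw [hf]
    exact div_nonneg (mul_nonneg (hP0 l) (Real.exp_pos _).le) (Real.sqrt_nonneg _)
  -- continuity of the coordinates that matter
  have hzcont : ∀ l : Fin M, P l ≠ 0 → ContinuousOn (fun t => z t l) (Set.Ici 0) := by
    intro l hPl
    by_cases hlD : l ∈ D
    · exact fun t ht => (hD l hlD t ht).continuousAt.continuousWithinAt
    · have hPl' : 0 < P l := (hP0 l).lt_of_ne (Ne.symm hPl)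
      exact fun t ht => (hC l hlD hPl' t ht).choose_spec.2.continuousAt.continuousWithinAt
  have hScont : ContinuousOn S (Set.Ici 0) := by
    apply continuousOn_finset_sum
    intro l _
    by_cases hPl : P l = 0
    · simpa [hPl] using continuousOn_const (c := (0:ℝ)) (s := Set.Ici (0:ℝ))
    · exact continuousOn_const.mul
        (Real.continuous_exp.comp_continuousOn (continuousOn_const.mul (hzcont l hPl)))
  -- the invariant: the dominant gap stays positive
  have hinvg : ∀ l ∈ D, l ≠ l₀ → 0 < P l → ∀ t : ℝ, 0 ≤ t →
      P l * Real.exp (z t l) < P l₀ * Real.exp (z t l₀) := by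
    intro l hlD hne hPl t ht
    set g : ℝ → ℝ := fun t => P l₀ * Real.exp (z t l₀) - P l * Real.exp (z t l) with hgdef
    set K : ℝ → ℝ := fun t => ηZ * ξ t *
      ((P l₀ * Real.exp (z t l₀)) ^ 2 + (P l₀ * Real.exp (z t l₀)) * (P l * Real.exp (z t l))
        + (P l * Real.exp (z t l)) ^ 2) / S t with hKdef
    have hg0 : 0 < g 0 := by
      have hd := hdom l hlD hne
      rw [hfsq, hfsq, div_lt_div_iff_of_pos_right (hSpos 0)] at hd
      rw [hexp2, hexp2] at hd
      have hb : 0 ≤ P l * Real.exp (z 0 l) := by positivity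
      have h2 : (P l * Real.exp (z 0 l)) ^ 2 < (P l₀ * Real.exp (z 0 l₀)) ^ 2 := by
        nlinarith [hd]
      have h3 : P l * Real.exp (z 0 l) < P l₀ * Real.exp (z 0 l₀) :=
        lt_of_pow_lt_pow_left₀ 2 (by positivity) h2
      simp only [hgdef]
      linarith
    have hgK : ∀ t : ℝ, 0 ≤ t → HasDerivAt g (K t * g t) t := by
      intro t ht
      have hda : HasDerivAt (fun s => P l₀ * Real.exp (z s l₀))
          (P l₀ * (Real.exp (z t l₀) * (ηZ * f t l₀ ^ 2 * ξ t))) t :=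
        ((hD l₀ hl₀ t ht).exp).const_mul (P l₀)
      have hdb : HasDerivAt (fun s => P l * Real.exp (z s l))
          (P l * (Real.exp (z t l) * (ηZ * f t l ^ 2 * ξ t))) t :=
        ((hD l hlD t ht).exp).const_mul (P l)
      have := hda.sub hdb
      refine HasDerivAt.congr_deriv this ?_
      rw [hKdef, hgdef]
      simp only
      rw [hfsq, hfsq, hexp2, hexp2]
      field_simp
      ring
    have hKcont : ContinuousOn K (Set.Ici 0) := by
      have ha : ContinuousOn (fun t => P l₀ * Real.exp (z t l₀)) (Set.Ici 0) :=
        continuousOn_const.mul (Real.continuous_exp.comp_continuousOn (hzcont l₀ hPl₀.ne'))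
      have hb : ContinuousOn (fun t => P l * Real.exp (z t l)) (Set.Ici 0) :=
        continuousOn_const.mul (Real.continuous_exp.comp_continuousOn (hzcont l hPl.ne'))
      exact ((continuousOn_const.mul hξcont.continuousOn).mul
        (((ha.pow 2).add (ha.mul hb)).add (hb.pow 2))).div hScont (fun t _ => (hSpos t).ne')
    have := myPosAux g K hKcont hgK hg0 t ht
    simp only [hgdef] at this
    linarith [this]
  -- consequence: f² comparison for distinct tokens, at all times
  have hinv : ∀ l ∈ D, ∀ t : ℝ, 0 ≤ t → f t l ^ 2 ≤ f t l₀ ^ 2 := by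
    intro l hlD t ht
    by_cases hl : l = l₀
    · subst hl
      exact le_refl _
    by_cases hP : P l = 0
    · rw [hfsq, hfsq, hP]
      have : (0:ℝ) ^ 2 * Real.exp (2 * z t l) / S t = 0 := by ring
      rw [this]
      positivity
    · have hPl : 0 < P l := (hP0 l).lt_of_ne (Ne.symm hP)
      have hba := hinvg l hlD hl hPl t ht
      have hb : 0 ≤ P l * Real.exp (z t l) := by positivity
      have h2 : (P l * Real.exp (z t l)) ^ 2 ≤ (P l₀ * Real.exp (z t l₀)) ^ 2 := by
        nlinarith
      rw [hfsq, hfsq, div_le_div_iff_of_pos_right (hSpos t)]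
      rw [hexp2, hexp2]
      nlinarith [h2]
  -- monotonicity of z l₀
  have hzd_nn : ∀ t : ℝ, 0 ≤ t → 0 ≤ ηZ * f t l₀ ^ 2 * ξ t := by
    intro t ht
    have := hξpos t ht
    positivity
  have hmonoz : MonotoneOn (fun t => z t l₀) (Set.Ici (0 : ℝ)) :=
    myMonoAux _ (fun t ht => ⟨ηZ * f t l₀ ^ 2 * ξ t, hzd_nn t ht, hD l₀ hl₀ t ht⟩)
  -- the ratio functions
  set ρ : Fin M → ℝ → ℝ := fun l t => (P l) ^ 2 * Real.exp (2 * (z t l - z t l₀)) with hρdef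
  have hρanti : ∀ l : Fin M, AntitoneOn (ρ l) (Set.Ici 0) := by
    intro l
    by_cases hP : P l = 0
    · intro s _ t _ _
      simp [hρdef, hP]
    have hPl : 0 < P l := (hP0 l).lt_of_ne (Ne.symm hP)
    apply myAntiAux
    intro t ht
    obtain ⟨dl, hdl_le, hder⟩ : ∃ dl, dl ≤ ηZ * f t l₀ ^ 2 * ξ t ∧
        HasDerivAt (fun s => z s l) dl t := by
      by_cases hlD : l ∈ D
      · refine ⟨ηZ * f t l ^ 2 * ξ t, ?_, hD l hlD t ht⟩
        have h1 := hinv l hlD t ht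
        have h2 := hξpos t ht
        exact mul_le_mul_of_nonneg_right (mul_le_mul_of_nonneg_left h1 hηZ.le) h2.le
      · obtain ⟨d, hdneg, hder⟩ := hC l hlD hPl t ht
        exact ⟨d, le_trans hdneg.le (hzd_nn t ht), hder⟩
    have hu : HasDerivAt (fun s => 2 * (z s l - z s l₀))
        (2 * (dl - ηZ * f t l₀ ^ 2 * ξ t)) t :=
      ((hder.sub (hD l₀ hl₀ t ht)).const_mul 2)
    have hρd : HasDerivAt (ρ l)
        ((P l) ^ 2 * (Real.exp (2 * (z t l - z t l₀)) * (2 * (dl - ηZ * f t l₀ ^ 2 * ξ t)))) t :=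
      (hu.exp).const_mul ((P l) ^ 2)
    refine ⟨_, ?_, hρd⟩
    have he : 0 < Real.exp (2 * (z t l - z t l₀)) := Real.exp_pos _
    have h3 : 2 * (dl - ηZ * f t l₀ ^ 2 * ξ t) ≤ 0 := by linarith
    exact mul_nonpos_of_nonneg_of_nonpos (sq_nonneg (P l))
      (mul_nonpos_of_nonneg_of_nonpos he.le h3)
  set T : ℝ → ℝ := fun t => ∑ l, ρ l t with hTdef
  have hTpos : ∀ t, 0 < T t := by
    intro t
    apply Finset.sum_pos' (fun l _ => by
      have : 0 ≤ ρ l t := by rw [hρdef]; positivity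
      exact this)
    refine ⟨l₀, Finset.mem_univ _, ?_⟩
    rw [hρdef]
    positivity
  have hTanti : AntitoneOn T (Set.Ici (0:ℝ)) := by
    intro s hs t ht hst
    exact Finset.sum_le_sum (fun l _ => hρanti l hs ht hst)
  have hST : ∀ t, S t = Real.exp (2 * z t l₀) * T t := by
    intro t
    rw [hTdef, Finset.mul_sum]
    apply Finset.sum_congr rfl
    intro l _
    rw [hρdef]
    simp only
    rw [← mul_assoc, mul_comm (Real.exp (2 * z t l₀)) ((P l)^2), mul_assoc, ← Real.exp_add]
    ring_nf
  have hfT : ∀ t, f t l₀ ^ 2 = (P l₀) ^ 2 / T t := by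
    intro t
    have hTne := (hTpos t).ne'
    have hexpne := (Real.exp_pos (2 * z t l₀)).ne'
    rw [hfsq, hST]
    field_simp
  have hmonof : MonotoneOn (fun t => f t l₀) (Set.Ici (0 : ℝ)) := by
    intro s hs t ht hst
    have h2 : f s l₀ ^ 2 ≤ f t l₀ ^ 2 := by
      rw [hfT, hfT]
      exact div_le_div_of_nonneg_left (sq_nonneg _) (hTpos t) (hTanti hs ht hst)
    calc f s l₀ = Real.sqrt (f s l₀ ^ 2) := (Real.sqrt_sq (hfnn s l₀)).symm
      _ ≤ Real.sqrt (f t l₀ ^ 2) := Real.sqrt_le_sqrt h2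
      _ = f t l₀ := Real.sqrt_sq (hfnn t l₀)
  have hflow : ∀ t : ℝ, 0 ≤ t → f 0 l₀ ^ 2 ≤ f t l₀ ^ 2 := by
    intro t ht
    have := hmonof (Set.self_mem_Ici) ht ht
    exact pow_le_pow_left₀ (hfnn 0 l₀) this 2
  -- derivative of B
  have hBder : ∀ t : ℝ, HasDerivAt B (ηZ * ξ t) t := by
    intro t
    have hfun : B = fun t => ηZ * ∫ t' in (0 : ℝ)..t, ξ t' := funext hB
    rw [hfun]
    exact ((hξcont.integral_hasStrictDerivAt 0 t).hasDerivAt).const_mul ηZ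
  have hB0 : B 0 = 0 := by rw [hB]; simp
  refine ⟨hmonoz, hmonof, ?_⟩
  intro t ht
  constructor
  · -- lower bound
    have hφ : MonotoneOn (fun t => z t l₀ - f 0 l₀ ^ 2 * B t) (Set.Ici (0:ℝ)) := by
      apply myMonoAux
      intro u hu
      refine ⟨ηZ * f u l₀ ^ 2 * ξ u - f 0 l₀ ^ 2 * (ηZ * ξ u), ?_,
        (hD l₀ hl₀ u hu).sub ((hBder u).const_mul (f 0 l₀ ^ 2))⟩
      have h1 := hflow u hu
      have h2 := hξpos u hu
      nlinarith [mul_nonneg (mul_nonneg hηZ.le (sub_nonneg.mpr h1)) h2.le]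
    have := hφ (Set.self_mem_Ici) ht ht
    simp only at this
    rw [hB0] at this
    rw [hχ]
    apply Real.exp_le_exp.mpr
    nlinarith [this]
  · -- upper bound
    have hψ : AntitoneOn (fun t => z t l₀ - B t) (Set.Ici (0:ℝ)) := by
      apply myAntiAux
      intro u hu
      refine ⟨ηZ * f u l₀ ^ 2 * ξ u - ηZ * ξ u, ?_, (hD l₀ hl₀ u hu).sub (hBder u)⟩
      have h1 := hfsq_le u l₀
      have h2 := hξpos u hu
      nlinarith [mul_nonneg (mul_nonneg hηZ.le (sub_nonneg.mpr h1)) h2.le]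
    have := hψ (Set.self_mem_Ici) ht ht
    simp only at this
    rw [hB0] at this
    rw [hχ]
    apply Real.exp_le_exp.mpr
    nlinarith [this]
end

section
/- Let K ≥ 1, M ≥ 2 be integers, η_Y, η_Z > 0, ρ₀ > 0. Let h : [0,∞) → ℝ solve h(0) = 0, h′(s) = η_Y/((M−1)+exp(M·h(s))), define γ(t) := (M−1)²·h(t/K)/((M−1)+exp(M·h(t/K))) and Γ(t) := η_Z·∫₀ᵗ γ(t')dt'. Let z : [0,∞) → ℝ solve z(0) = 0 and ż(t) = −K·ρ₀^{−4}·η_Z·γ(t)·e^{4z(t)}, and define ξ(t) := K·ρ₀^{−4}·γ(t)·e^{4z(t)} and B(t) := η_Z·∫₀ᵗ ξ(t')dt'. Then for all t ≥ 0: (i) e^{−4z(t)} = 1 + 4K·ρ₀^{−4}·Γ(t); (ii) ξ(t) = γ(t)/(ρ₀⁴/K + 4Γ(t)); (iii) B(t) = (1/4)·ln(1 + 4K·ρ₀^{−4}·Γ(t)); (iv) Γ(t) = (η_Z/η_Y)·(K(M−1)²/2)·h(t/K)², and hence B(t) = (1/4)·ln(1 + 2(η_Z/η_Y)·(K²(M−1)²/ρ₀⁴)·h(t/K)²).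 -/
open Real

open Set MeasureTheory intervalIntegral

lemma my_ftc_within (f : ℝ → ℝ) (hf : ∀ x : ℝ, 0 ≤ x → ContinuousAt f x)
    {x : ℝ} (hx : 0 ≤ x) :
    HasDerivWithinAt (fun u => ∫ s in (0:ℝ)..u, f s) (f x) (Set.Ici x) x := by
  have hco : ContinuousOn f (Set.Ici 0) := fun y hy => (hf y hy).continuousWithinAt
  have hint : IntervalIntegrable f volume 0 x :=
    (hco.mono (by rw [Set.uIcc_of_le hx]; exact Set.Icc_subset_Ici_self)).intervalIntegrable
  exact intervalIntegral.integral_hasDerivWithinAt_right (t := Set.Ioi x) hint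
    ⟨Set.Ioi 0, Filter.mem_of_superset self_mem_nhdsWithin (Set.Ioi_subset_Ioi hx),
      (hco.mono Set.Ioi_subset_Ici_self).aestronglyMeasurable measurableSet_Ioi⟩
    (hf x hx).continuousWithinAt

lemma my_ftc_at (f : ℝ → ℝ) (hf : ∀ x : ℝ, 0 ≤ x → ContinuousAt f x)
    {x : ℝ} (hx : 0 < x) :
    HasDerivAt (fun u => ∫ s in (0:ℝ)..u, f s) (f x) x := by
  have hco : ContinuousOn f (Set.Ici 0) := fun y hy => (hf y hy).continuousWithinAt
  have hint : IntervalIntegrable f volume 0 x :=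
    (hco.mono (by rw [Set.uIcc_of_le hx.le]; exact Set.Icc_subset_Ici_self)).intervalIntegrable
  exact intervalIntegral.integral_hasDerivAt_right hint
    ⟨Set.Ioi 0, Ioi_mem_nhds hx,
      (hco.mono Set.Ioi_subset_Ici_self).aestronglyMeasurable measurableSet_Ioi⟩
    (hf x hx.le)

lemma my_eq_on (f g f' : ℝ → ℝ)
    (hf : ∀ x : ℝ, 0 ≤ x → HasDerivWithinAt f (f' x) (Set.Ici x) x)
    (hfc : ∀ x : ℝ, 0 < x → ContinuousAt f x)
    (hg : ∀ x : ℝ, 0 ≤ x → HasDerivWithinAt g (f' x) (Set.Ici x) x)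
    (hgc : ∀ x : ℝ, 0 < x → ContinuousAt g x)
    (h0 : f 0 = g 0) {t : ℝ} (ht : 0 ≤ t) : f t = g t := by
  have fc : ContinuousOn f (Set.Icc 0 t) := by
    intro x hx
    rcases eq_or_lt_of_le hx.1 with rfl | hlt
    · exact ((hf 0 le_rfl).continuousWithinAt).mono (fun y hy => hy.1)
    · exact (hfc x hlt).continuousWithinAt
  have gc : ContinuousOn g (Set.Icc 0 t) := by
    intro x hx
    rcases eq_or_lt_of_le hx.1 with rfl | hlt
    · exact ((hg 0 le_rfl).continuousWithinAt).mono (fun y hy => hy.1)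
    · exact (hgc x hlt).continuousWithinAt
  exact eq_of_has_deriv_right_eq (fun x hx => hf x hx.1) (fun x hx => hg x hx.1)
    fc gc h0 t ⟨ht, le_rfl⟩


/-- Closed forms underlying the phase-transition theorem.  With `h` the
solution of the decoder ODE, `γ(t) = (M−1)²h(t/K)/((M−1)+exp(M h(t/K)))`,
`Γ(t) = η_Z ∫₀ᵗ γ`, `z` the common-token logit solving `ż = −K ρ₀⁻⁴ η_Z γ(t) e^{4z}`,
`ξ(t) = K ρ₀⁻⁴ γ(t) e^{4z(t)}` and `B(t) = η_Z ∫₀ᵗ ξ`, one has for all `t ≥ 0`: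
(i) `e^{−4z(t)} = 1 + 4K ρ₀⁻⁴ Γ(t)`;  (ii) `ξ(t) = γ(t)/(ρ₀⁴/K + 4Γ(t))`;
(iii) `B(t) = ¼ ln(1 + 4K ρ₀⁻⁴ Γ(t))`;  (iv) `Γ(t) = (η_Z/η_Y)(K(M−1)²/2) h(t/K)²` and hence
`B(t) = ¼ ln(1 + 2(η_Z/η_Y)(K²(M−1)²/ρ₀⁴) h(t/K)²)`. -/
theorem stmt_19 (M K : ℕ) (hM : 2 ≤ M) (hK : 1 ≤ K)
    (ηY ηZ ρ₀ : ℝ) (hηY : 0 < ηY) (hηZ : 0 < ηZ) (hρ₀ : 0 < ρ₀)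
    -- decoder ODE
    (h : ℝ → ℝ) (hh0 : h 0 = 0)
    (hhderiv : ∀ s : ℝ, 0 ≤ s →
      HasDerivAt h (ηY / (((M : ℝ) - 1) + Real.exp (M * h s))) s)
    -- speed control coefficient and its accumulation
    (γ Γ : ℝ → ℝ)
    (hγ : ∀ t, γ t = ((M : ℝ) - 1) ^ 2 * h (t / K) /
      (((M : ℝ) - 1) + Real.exp (M * h (t / K))))
    (hΓ : ∀ t, Γ t = ηZ * ∫ t' in (0 : ℝ)..t, γ t')
    -- common-token logit dynamics
    (z : ℝ → ℝ) (hz0 : z 0 = 0)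
    (hzderiv : ∀ t : ℝ, 0 ≤ t →
      HasDerivAt z (-((K : ℝ) * ηZ * γ t * Real.exp (4 * z t) / ρ₀ ^ 4)) t)
    -- speed coefficient and accumulated speed
    (ξ B : ℝ → ℝ)
    (hξ : ∀ t, ξ t = (K : ℝ) * γ t * Real.exp (4 * z t) / ρ₀ ^ 4)
    (hB : ∀ t, B t = ηZ * ∫ t' in (0 : ℝ)..t, ξ t') :
    ∀ t : ℝ, 0 ≤ t →
      Real.exp (-(4 * z t)) = 1 + 4 * K * Γ t / ρ₀ ^ 4 ∧
      ξ t = γ t / (ρ₀ ^ 4 / K + 4 * Γ t) ∧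
      B t = (1 / 4) * Real.log (1 + 4 * K * Γ t / ρ₀ ^ 4) ∧
      Γ t = (ηZ / ηY) * ((K : ℝ) * ((M : ℝ) - 1) ^ 2 / 2) * h (t / K) ^ 2 ∧
      B t = (1 / 4) * Real.log
        (1 + 2 * (ηZ / ηY) * ((K : ℝ) ^ 2 * ((M : ℝ) - 1) ^ 2 / ρ₀ ^ 4) * h (t / K) ^ 2) := by
  have hK0 : (0:ℝ) < K := by exact_mod_cast Nat.lt_of_lt_of_le Nat.zero_lt_one hK
  have hKne : (K:ℝ) ≠ 0 := ne_of_gt hK0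
  have hρne : ρ₀ ^ 4 ≠ 0 := pow_ne_zero 4 (ne_of_gt hρ₀)
  have hden : ∀ s : ℝ, ((M : ℝ) - 1) + Real.exp (M * h s) ≠ 0 := by
    intro s
    have h1 : (1:ℝ) ≤ (M:ℝ) - 1 := by
      have : (2:ℝ) ≤ (M:ℝ) := by exact_mod_cast hM
      linarith
    positivity
  -- continuity of the map t ↦ h (t/K) on [0,∞)
  have hhc : ∀ x : ℝ, 0 ≤ x → ContinuousAt (fun t : ℝ => h (t / K)) x := by
    intro x hx
    have h1 : ContinuousAt h (x / K) := (hhderiv (x / K) (by positivity)).continuousAt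
    exact ContinuousAt.comp (f := fun t : ℝ => t / (K:ℝ)) (x := x) h1
      ((continuous_id.div_const (K:ℝ)).continuousAt)
  have γcont : ∀ x : ℝ, 0 ≤ x → ContinuousAt γ x := by
    intro x hx
    rw [funext hγ]
    exact (continuousAt_const.mul (hhc x hx)).div
      (continuousAt_const.add (Real.continuous_exp.continuousAt.comp
        (continuousAt_const.mul (hhc x hx)))) (hden _)
  have zcont : ∀ x : ℝ, 0 ≤ x → ContinuousAt z x :=
    fun x hx => (hzderiv x hx).continuousAt
  have ξcont : ∀ x : ℝ, 0 ≤ x → ContinuousAt ξ x := by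
    intro x hx
    rw [funext hξ]
    exact ((continuousAt_const.mul (γcont x hx)).mul
      (Real.continuous_exp.continuousAt.comp (continuousAt_const.mul (zcont x hx)))).div_const _
  set I : ℝ → ℝ := fun u => ∫ s in (0:ℝ)..u, γ s with hI
  set J : ℝ → ℝ := fun u => ∫ s in (0:ℝ)..u, ξ s with hJ
  -- common derivative for statement (i)
  set d : ℝ → ℝ := fun x => 4 * K * ηZ * γ x / ρ₀ ^ 4 with hd
  have hfd : ∀ x : ℝ, 0 ≤ x → HasDerivAt (fun t => Real.exp (-(4 * z t))) (d x) x := by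
    intro x hx
    have h3 := (((hzderiv x hx).const_mul (4:ℝ)).neg).exp
    refine h3.congr_deriv ?_
    symm
    simp only [hd]
    have e1 : Real.exp (-(4 * z x)) * Real.exp (4 * z x) = 1 := by
      rw [← Real.exp_add]; simp
    calc (4:ℝ) * K * ηZ * γ x / ρ₀ ^ 4
        = (Real.exp (-(4 * z x)) * Real.exp (4 * z x)) * (4 * K * ηZ * γ x / ρ₀ ^ 4) := by
          rw [e1, one_mul]
      _ = Real.exp (-(4 * z x)) * -(4 * -((K:ℝ) * ηZ * γ x * Real.exp (4 * z x) / ρ₀ ^ 4)) := by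
          ring
  have hgd : ∀ x : ℝ, 0 ≤ x →
      HasDerivWithinAt (fun t => 1 + 4 * K * (ηZ * I t) / ρ₀ ^ 4) (d x) (Set.Ici x) x := by
    intro x hx
    have hIx := my_ftc_within γ γcont hx
    have := (((hIx.const_mul ηZ).const_mul (4 * (K:ℝ))).div_const (ρ₀ ^ 4)).const_add 1
    refine this.congr_deriv ?_
    symm
    simp [hd]; ring
  have hgdc : ∀ x : ℝ, 0 < x → ContinuousAt (fun t => 1 + 4 * K * (ηZ * I t) / ρ₀ ^ 4) x := by
    intro x hx
    have hIx := my_ftc_at γ γcont hx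
    exact (((hIx.continuousAt.const_mul ηZ).const_mul (4 * (K:ℝ))).div_const (ρ₀ ^ 4)).const_add 1
  have key1 : ∀ x : ℝ, 0 ≤ x → Real.exp (-(4 * z x)) = 1 + 4 * K * Γ x / ρ₀ ^ 4 := by
    intro x hx
    rw [hΓ]
    have := my_eq_on (fun t => Real.exp (-(4 * z t)))
      (fun t => 1 + 4 * K * (ηZ * I t) / ρ₀ ^ 4) d
      (fun y hy => (hfd y hy).hasDerivWithinAt)
      (fun y hy => (hfd y hy.le).continuousAt)
      hgd hgdc (by simp [hz0, hI, intervalIntegral.integral_same]) hx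
    simpa [hI] using this
  -- statement (iv)
  have key4 : ∀ x : ℝ, 0 ≤ x →
      Γ x = (ηZ / ηY) * ((K : ℝ) * ((M : ℝ) - 1) ^ 2 / 2) * h (x / K) ^ 2 := by
    intro x hx
    rw [hΓ]
    have hgder : ∀ y : ℝ, 0 ≤ y → HasDerivAt
        (fun t => (ηZ / ηY) * ((K : ℝ) * ((M : ℝ) - 1) ^ 2 / 2) * h (t / K) ^ 2)
        (ηZ * γ y) y := by
      intro y hy
      have hinner : HasDerivAt (fun t : ℝ => t / K) (1 / K) y := (hasDerivAt_id y).div_const K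
      have hcomp : HasDerivAt (fun t : ℝ => h (t / K))
          ((ηY / (((M : ℝ) - 1) + Real.exp (M * h (y / K)))) * (1 / K)) y :=
        (hhderiv (y / K) (by positivity)).comp y hinner
      have := (hcomp.pow 2).const_mul ((ηZ / ηY) * ((K : ℝ) * ((M : ℝ) - 1) ^ 2 / 2))
      refine this.congr_deriv ?_
      symm
      have hd1 := hden (y / (K:ℝ))
      rw [hγ]
      field_simp
      ring
    have := my_eq_on (fun t => ηZ * I t)
      (fun t => (ηZ / ηY) * ((K : ℝ) * ((M : ℝ) - 1) ^ 2 / 2) * h (t / K) ^ 2)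
      (fun y => ηZ * γ y)
      (fun y hy => ((my_ftc_within γ γcont hy).const_mul ηZ))
      (fun y hy => ((my_ftc_at γ γcont hy).continuousAt.const_mul ηZ))
      (fun y hy => (hgder y hy).hasDerivWithinAt)
      (fun y hy => (hgder y hy.le).continuousAt)
      (by simp [hI, intervalIntegral.integral_same, zero_div, hh0]) hx
    simpa [hI] using this
  -- statement (iii)
  have key3 : ∀ x : ℝ, 0 ≤ x →
      B x = (1 / 4) * Real.log (1 + 4 * K * Γ x / ρ₀ ^ 4) := by
    intro x hx
    have hgder : ∀ y : ℝ, 0 ≤ y → HasDerivWithinAt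
        (fun t => (1 / 4) * Real.log (1 + 4 * K * (ηZ * I t) / ρ₀ ^ 4))
        (ηZ * ξ y) (Set.Ici y) y := by
      intro y hy
      have hPy : 1 + 4 * K * (ηZ * I y) / ρ₀ ^ 4 = Real.exp (-(4 * z y)) := by
        rw [key1 y hy, hΓ]
      have hPne : 1 + 4 * K * (ηZ * I y) / ρ₀ ^ 4 ≠ 0 := by
        rw [hPy]; exact Real.exp_ne_zero _
      have := ((hgd y hy).log hPne).const_mul (1/4 : ℝ)
      refine this.congr_deriv ?_
      symm
      rw [hξ, hPy, Real.exp_neg, hd]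
      field_simp
    have hgc : ∀ y : ℝ, 0 < y → ContinuousAt
        (fun t => (1 / 4) * Real.log (1 + 4 * K * (ηZ * I t) / ρ₀ ^ 4)) y := by
      intro y hy
      have hPy : 1 + 4 * K * (ηZ * I y) / ρ₀ ^ 4 = Real.exp (-(4 * z y)) := by
        rw [key1 y hy.le, hΓ]
      have hPne : 1 + 4 * K * (ηZ * I y) / ρ₀ ^ 4 ≠ 0 := by
        rw [hPy]; exact Real.exp_ne_zero _
      exact (((hgdc y hy).log hPne).const_mul (1/4 : ℝ))
    have := my_eq_on (fun t => ηZ * J t)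
      (fun t => (1 / 4) * Real.log (1 + 4 * K * (ηZ * I t) / ρ₀ ^ 4))
      (fun y => ηZ * ξ y)
      (fun y hy => ((my_ftc_within ξ ξcont hy).const_mul ηZ))
      (fun y hy => ((my_ftc_at ξ ξcont hy).continuousAt.const_mul ηZ))
      hgder hgc
      (by simp [hI, hJ, intervalIntegral.integral_same]) hx
    rw [hB, hΓ]
    simpa [hI, hJ] using this
  intro t ht
  have hPpos : 0 < 1 + 4 * K * Γ t / ρ₀ ^ 4 := (key1 t ht) ▸ Real.exp_pos _
  refine ⟨key1 t ht, ?_, key3 t ht, key4 t ht, ?_⟩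
  · -- (ii)
    have e4 : Real.exp (4 * z t) = (1 + 4 * K * Γ t / ρ₀ ^ 4)⁻¹ := by
      rw [← key1 t ht, ← Real.exp_neg, neg_neg]
    have hden2 : ρ₀ ^ 4 / K + 4 * Γ t = (ρ₀ ^ 4 / K) * (1 + 4 * K * Γ t / ρ₀ ^ 4) := by
      field_simp
    rw [hξ, e4, hden2]
    field_simp
  · rw [key3 t ht, key4 t ht]
    congr 2
    ring
end
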